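/- arXiv:2506.22332 — 5 statements merged into one kernel-verified Lean document; each statement's English description precedes it below -/
import Mathlib

section
/- Suppose in addition that φ := f + g has bounded sublevel sets, i.e. {x ∈ ℝ^n : φ(x) ≤ α} is bounded for every α ∈ ℝ. Then the forward-backward envelope φ_γ also has bounded sublevel sets: for every α ∈ ℝ, the set {x ∈ ℝ^n : φ_γ(x) ≤ α} is bounded. -/
noncomputable section

open scoped RealInnerProductSpace
open Filter Topology Bornology

/-- The common setting: `f : ℝⁿ → ℝ` is `C^{1,1}` with gradient `f'`;
`g : ℝⁿ → ℝ ∪ {+∞}` is proper, lsc and `ρ`-weakly convex; `φ = f + g` is bounded below;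
`γ ∈ (0, min (1/L_f) (1/ρ))`; and `prox x` is the unique minimizer of
`z ↦ g z + ‖z - x‖²/(2γ)`. -/
structure FBEData (n : ℕ) where
  f : EuclideanSpace ℝ (Fin n) → ℝ
  g : EuclideanSpace ℝ (Fin n) → EReal
  Lf : ℝ
  ρ : ℝ
  γ : ℝ
  f' : EuclideanSpace ℝ (Fin n) → EuclideanSpace ℝ (Fin n)
  prox : EuclideanSpace ℝ (Fin n) → EuclideanSpace ℝ (Fin n)
  hLf : 0 < Lf
  hρ : 0 < ρ
  hγ0 : 0 < γ
  hγ : γ < min (1 / Lf) (1 / ρ)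
  hf : ∀ x, HasGradientAt f (f' x) x
  hf_lip : LipschitzWith (Real.toNNReal Lf) f'
  hg_proper : ∃ x, g x ≠ ⊤
  hg_nebot : ∀ x, g x ≠ ⊥
  hg_lsc : LowerSemicontinuous g
  hg_wc : ∀ x y : EuclideanSpace ℝ (Fin n), ∀ t : ℝ, 0 ≤ t → t ≤ 1 →
    g (t • x + (1 - t) • y) + (((ρ / 2) * ‖t • x + (1 - t) • y‖ ^ 2 : ℝ) : EReal)
      ≤ (t : EReal) * (g x + (((ρ / 2) * ‖x‖ ^ 2 : ℝ) : EReal))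
        + ((1 - t : ℝ) : EReal) * (g y + (((ρ / 2) * ‖y‖ ^ 2 : ℝ) : EReal))
  hφ_bdd : ∃ c : ℝ, ∀ x, (c : EReal) ≤ (f x : EReal) + g x
  hprox_min : ∀ x z,
    g (prox x) + (((1 / (2 * γ)) * ‖prox x - x‖ ^ 2 : ℝ) : EReal)
      ≤ g z + (((1 / (2 * γ)) * ‖z - x‖ ^ 2 : ℝ) : EReal)
  hprox_unique : ∀ x z,
    g z + (((1 / (2 * γ)) * ‖z - x‖ ^ 2 : ℝ) : EReal)
      ≤ g (prox x) + (((1 / (2 * γ)) * ‖prox x - x‖ ^ 2 : ℝ) : EReal) → z = prox x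

namespace FBEData

variable {n : ℕ} (S : FBEData n)

/-- The objective `φ = f + g` (with values in `ℝ ∪ {±∞}`). -/
def phi (x : EuclideanSpace ℝ (Fin n)) : EReal := (S.f x : EReal) + S.g x

/-- The forward-backward envelope, as an extended-real-valued infimum. -/
def fbeE (x : EuclideanSpace ℝ (Fin n)) : EReal :=
  ⨅ u : EuclideanSpace ℝ (Fin n),
    ((S.f x + ⟪S.f' x, u - x⟫ + (1 / (2 * S.γ)) * ‖u - x‖ ^ 2 : ℝ) : EReal) + S.g u

/-- The (real-valued) forward-backward envelope `φ_γ`. -/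
def fbe (x : EuclideanSpace ℝ (Fin n)) : ℝ := (S.fbeE x).toReal

/-- The forward-backward (proximal gradient) operator `T_γ`. -/
def T (x : EuclideanSpace ℝ (Fin n)) : EuclideanSpace ℝ (Fin n) :=
  S.prox (x - S.γ • S.f' x)

/-- The fixed-point residual `R_γ`. -/
def R (x : EuclideanSpace ℝ (Fin n)) : EuclideanSpace ℝ (Fin n) :=
  (1 / S.γ) • (x - S.T x)

/-- The Moreau envelope `g^γ` of `g`. -/
def moreauE (y : EuclideanSpace ℝ (Fin n)) : EReal :=
  ⨅ z : EuclideanSpace ℝ (Fin n),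
    S.g z + (((1 / (2 * S.γ)) * ‖z - y‖ ^ 2 : ℝ) : EReal)

end FBEData


section Aux

open scoped RealInnerProductSpace

lemma descent_lemma {n : ℕ} (f : EuclideanSpace ℝ (Fin n) → ℝ)
    (f' : EuclideanSpace ℝ (Fin n) → EuclideanSpace ℝ (Fin n)) (L : ℝ) (hL : 0 ≤ L)
    (hf : ∀ x, HasGradientAt f (f' x) x) (hlip : LipschitzWith (Real.toNNReal L) f')
    (x y : EuclideanSpace ℝ (Fin n)) :
    f y ≤ f x + ⟪f' x, y - x⟫ + L / 2 * ‖y - x‖ ^ 2 := by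
  set v := y - x with hv
  set h : ℝ → ℝ := fun t => f (x + t • v) - t * ⟪f' x, v⟫ - L * t ^ 2 / 2 * ‖v‖ ^ 2 with hh
  have hline : ∀ t : ℝ, HasDerivAt (fun t : ℝ => x + t • v) v t := fun t => by
    simpa using ((hasDerivAt_id t).smul_const v).const_add x
  have hd : ∀ t : ℝ, HasDerivAt h (⟪f' (x + t • v), v⟫ - ⟪f' x, v⟫ - L * t * ‖v‖ ^ 2) t := by
    intro t
    have h1 : HasDerivAt (fun t : ℝ => f (x + t • v)) (⟪f' (x + t • v), v⟫) t := by
      have := ((hf (x + t • v)).hasFDerivAt).comp_hasDerivAt t (hline t)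
      simp [InnerProductSpace.toDual_apply_apply] at this; exact this
    have h2 : HasDerivAt (fun t : ℝ => t * ⟪f' x, v⟫) (⟪f' x, v⟫) t := by
      simpa using (hasDerivAt_id t).mul_const (⟪f' x, v⟫)
    have h3 : HasDerivAt (fun t : ℝ => L * t ^ 2 / 2 * ‖v‖ ^ 2) (L * t * ‖v‖ ^ 2) t := by
      have hp : HasDerivAt (fun t : ℝ => t ^ 2) (2 * t) t := by
        simpa using hasDerivAt_pow 2 t
      have := ((hp.const_mul L).div_const 2).mul_const (‖v‖ ^ 2)
      exact this.congr_deriv (by ring)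
    exact (h1.sub h2).sub h3
  have hdiff : Differentiable ℝ h := fun t => (hd t).differentiableAt
  have hmono : AntitoneOn h (Set.Icc 0 1) := by
    apply antitoneOn_of_deriv_nonpos (convex_Icc 0 1) hdiff.continuous.continuousOn
      (hdiff.differentiableOn)
    intro t ht
    rw [interior_Icc] at ht
    rw [(hd t).deriv]
    have hb : ⟪f' (x + t • v) - f' x, v⟫ ≤ L * t * ‖v‖ ^ 2 := by
      have hlp : ‖f' (x + t • v) - f' x‖ ≤ L * ‖t • v‖ := by
        have := hlip.dist_le_mul (x + t • v) x
        rw [dist_eq_norm, dist_eq_norm, Real.coe_toNNReal L hL] at this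
        simpa using this
      calc ⟪f' (x + t • v) - f' x, v⟫ ≤ ‖f' (x + t • v) - f' x‖ * ‖v‖ :=
            real_inner_le_norm _ _
        _ ≤ L * ‖t • v‖ * ‖v‖ := mul_le_mul_of_nonneg_right hlp (norm_nonneg _)
        _ = L * t * ‖v‖ ^ 2 := by
            rw [norm_smul, Real.norm_eq_abs, abs_of_pos ht.1]; ring
    have heq : ⟪f' (x + t • v), v⟫ - ⟪f' x, v⟫ = ⟪f' (x + t • v) - f' x, v⟫ := by
      rw [inner_sub_left]
    linarith [hb, heq.le, heq.ge]
  have h01 : h 1 ≤ h 0 := hmono (by norm_num) (by norm_num) (by norm_num)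
  have e0 : h 0 = f x := by simp [hh]
  have hy : x + (1 : ℝ) • v = y := by simp [hv]
  have e1 : h 1 = f y - ⟪f' x, v⟫ - L / 2 * ‖v‖ ^ 2 := by
    simp only [hh, hy, one_pow, one_mul]; ring
  rw [e0, e1] at h01
  linarith

namespace FBEData

variable {n : ℕ} (S : FBEData n)

lemma gamma_ne : S.γ ≠ 0 := ne_of_gt S.hγ0

/-- The key algebraic identity: completing the square. -/
lemma complete_square (x u : EuclideanSpace ℝ (Fin n)) :
    S.f x + ⟪S.f' x, u - x⟫ + (1 / (2 * S.γ)) * ‖u - x‖ ^ 2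
      = (S.f x - S.γ / 2 * ‖S.f' x‖ ^ 2)
        + (1 / (2 * S.γ)) * ‖u - (x - S.γ • S.f' x)‖ ^ 2 := by
  have h1 : u - (x - S.γ • S.f' x) = (u - x) + S.γ • S.f' x := by abel
  rw [h1, @norm_add_sq_real]
  rw [real_inner_smul_right, norm_smul, Real.norm_eq_abs, abs_of_pos S.hγ0]
  rw [real_inner_comm (u - x) (S.f' x)]
  have hγ : S.γ ≠ 0 := S.gamma_ne
  field_simp
  ring

lemma g_T_ne_top (x : EuclideanSpace ℝ (Fin n)) : S.g (S.T x) ≠ ⊤ := by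
  obtain ⟨z₀, hz₀⟩ := S.hg_proper
  have h := S.hprox_min (x - S.γ • S.f' x) z₀
  intro htop
  rw [FBEData.T] at htop
  rw [htop] at h
  have hlt : S.g z₀ + (((1 / (2 * S.γ)) * ‖z₀ - (x - S.γ • S.f' x)‖ ^ 2 : ℝ) : EReal) < ⊤ := by
    lift S.g z₀ to ℝ using ⟨hz₀, S.hg_nebot z₀⟩ with r hr
    exact_mod_cast lt_of_le_of_lt (le_refl _) (by exact_mod_cast EReal.coe_lt_top _)
  rw [EReal.top_add_coe] at h
  exact absurd (lt_of_le_of_lt h hlt) (lt_irrefl _)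

/-- The FBE infimum is attained at `T x`. -/
lemma fbeE_eq (x : EuclideanSpace ℝ (Fin n)) :
    S.fbeE x =
      ((S.f x + ⟪S.f' x, S.T x - x⟫ + (1 / (2 * S.γ)) * ‖S.T x - x‖ ^ 2 : ℝ) : EReal)
        + S.g (S.T x) := by
  apply le_antisymm
  · exact iInf_le _ (S.T x)
  · apply le_iInf
    intro u
    set y := x - S.γ • S.f' x with hy
    have hprox := S.hprox_min y u
    have hT : S.T x = S.prox y := rfl
    rw [S.complete_square x (S.T x), S.complete_square x u]
    set C : ℝ := S.f x - S.γ / 2 * ‖S.f' x‖ ^ 2 with hC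
    rw [EReal.coe_add, EReal.coe_add, add_assoc, add_assoc, add_comm
      (((1 / (2 * S.γ)) * ‖S.T x - y‖ ^ 2 : ℝ) : EReal) (S.g (S.T x)), add_comm
      (((1 / (2 * S.γ)) * ‖u - y‖ ^ 2 : ℝ) : EReal) (S.g u)]
    rw [hT]; exact add_le_add (le_refl _) hprox

end FBEData

end Aux

/-- if `φ = f + g` has bounded sublevel sets, then so does `φ_γ`. -/
theorem stmt2 {n : ℕ} (S : FBEData n)
    (hlev : ∀ α : ℝ, Bornology.IsBounded {x : EuclideanSpace ℝ (Fin n) | S.phi x ≤ (α : EReal)}) :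
    ∀ α : ℝ, Bornology.IsBounded {x : EuclideanSpace ℝ (Fin n) | S.fbe x ≤ α} := by
  intro α
  obtain ⟨m, hm⟩ := S.hφ_bdd
  set q : ℝ := 1 / (2 * S.γ) with hq
  set c : ℝ := q - S.Lf / 2 with hc
  have hγLf : S.γ < 1 / S.Lf := lt_of_lt_of_le S.hγ (min_le_left _ _)
  have hγLf' : S.γ * S.Lf < 1 := (lt_div_iff₀ S.hLf).mp hγLf
  have hcpos : 0 < c := by
    have h2 : S.Lf / 2 < q := by
      rw [hq, div_lt_div_iff₀ two_pos (mul_pos two_pos S.hγ0)]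
      nlinarith [S.hγ0]
    rw [hc]; linarith
  have key : ∀ x : EuclideanSpace ℝ (Fin n), S.fbe x ≤ α →
      S.phi (S.T x) ≤ (α : EReal) ∧ ‖S.T x - x‖ ^ 2 ≤ (α - m) / c := by
    intro x hx
    obtain ⟨gT, hgT⟩ : ∃ r : ℝ, S.g (S.T x) = (r : EReal) := by
      lift S.g (S.T x) to ℝ using ⟨S.g_T_ne_top x, S.hg_nebot _⟩ with r hr
      exact ⟨r, rfl⟩
    have hfbe : S.fbe x = S.f x + ⟪S.f' x, S.T x - x⟫ + q * ‖S.T x - x‖ ^ 2 + gT := by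
      rw [FBEData.fbe, S.fbeE_eq, hgT, ← EReal.coe_add, EReal.toReal_coe, hq]
    have hdesc := descent_lemma S.f S.f' S.Lf (le_of_lt S.hLf) S.hf S.hf_lip x (S.T x)
    have hmx : m ≤ S.f (S.T x) + gT := by
      have h := hm (S.T x)
      rw [hgT, ← EReal.coe_add] at h
      exact_mod_cast h
    have hexp : c * ‖S.T x - x‖ ^ 2
        = q * ‖S.T x - x‖ ^ 2 - S.Lf / 2 * ‖S.T x - x‖ ^ 2 := by rw [hc]; ring
    have hr : S.f (S.T x) + gT + c * ‖S.T x - x‖ ^ 2 ≤ α := by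
      rw [hfbe] at hx
      rw [hexp]
      linarith [hdesc]
    have hcs : 0 ≤ c * ‖S.T x - x‖ ^ 2 := mul_nonneg hcpos.le (sq_nonneg _)
    constructor
    · rw [FBEData.phi, hgT, ← EReal.coe_add]
      exact_mod_cast (by linarith : S.f (S.T x) + gT ≤ α)
    · rw [le_div_iff₀ hcpos, mul_comm]
      linarith
  obtain ⟨R, hR⟩ := (hlev α).subset_closedBall 0
  apply Bornology.IsBounded.subset
    (Metric.isBounded_closedBall (x := (0 : EuclideanSpace ℝ (Fin n)))
      (r := R + Real.sqrt ((α - m) / c)))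
  intro x hx
  obtain ⟨h1, h2⟩ := key x hx
  have hTball := hR h1
  rw [Metric.mem_closedBall, dist_zero_right] at hTball
  have hnorm : ‖S.T x - x‖ ≤ Real.sqrt ((α - m) / c) := by
    rw [← Real.sqrt_sq (norm_nonneg (S.T x - x))]
    exact Real.sqrt_le_sqrt h2
  rw [Metric.mem_closedBall, dist_zero_right]
  have htri : ‖x‖ ≤ ‖S.T x‖ + ‖S.T x - x‖ := by
    have := norm_sub_le (S.T x) (S.T x - x)
    rwa [sub_sub_cancel] at this
  linarith
end
end

section
/- Let x⋆ ∈ ℝ^n be a critical point (T_γ(x⋆) = x⋆). Assume f is three times continuously differentiable on a neighborhood of x⋆ and that prox_{γg} is continuously differentiable on a neighborhood of x⋆ − γ∇f(x⋆). Then there exists an open neighborhood U of x⋆ on which R_γ is continuously differentiable and φ_γ is twice continuously differentiable, and for every x ∈ U: the Jacobian of R_γ is JR_γ(x) = (1/γ)(I − P_γ(x) Q_γ(x)), where Q_γ(x) := I − γ∇²f(x) and P_γ(x) := Jprox_{γg}(x − γ∇f(x)) (the Jacobian matrix of prox_{γg} at x − γ∇f(x)); and the Hessian of φ_γ is ∇²φ_γ(x)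 = Q_γ(x) JR_γ(x) + M_γ(x), where M_γ(x) is the n×n matrix with entries [M_γ(x)]_{ik} = −γ Σ_{j=1}^n (∂³f(x)/∂x_i∂x_j∂x_k) [R_γ(x)]_j. -/
noncomputable section

open scoped RealInnerProductSpace
open Filter Topology Bornology

/-- Abbreviation for Euclidean space `ℝⁿ`. -/
abbrev Euc (n : ℕ) := EuclideanSpace ℝ (Fin n)

namespace FBEAux

open InnerProductSpace

variable {n : ℕ}

/-- The (real-valued) Moreau envelope. -/
def mEnv (S : FBEData n) (y : Euc n) : ℝ :=
  (S.g (S.prox y)).toReal + (1 / (2 * S.γ)) * ‖S.prox y - y‖ ^ 2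

/-- Gradient of the Moreau envelope. -/
def GmEnv (S : FBEData n) (y : Euc n) : Euc n := (1 / S.γ) • (y - S.prox y)

lemma g_prox_real (S : FBEData n) (y : Euc n) :
    S.g (S.prox y) = (((S.g (S.prox y)).toReal : ℝ) : EReal) := by
  obtain ⟨x₀, hx₀⟩ := S.hg_proper
  refine (EReal.coe_toReal ?_ (S.hg_nebot _)).symm
  intro htop
  have h := S.hprox_min y x₀
  rw [htop] at h
  rw [← EReal.coe_toReal hx₀ (S.hg_nebot x₀)] at h
  rw [← EReal.coe_add] at h
  rw [EReal.top_add_coe] at h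
  exact absurd (le_of_eq (top_le_iff.mp h).symm) (not_le.mpr (EReal.coe_lt_top _))

lemma g_prox_ne_top (S : FBEData n) (y : Euc n) : S.g (S.prox y) ≠ ⊤ := by
  rw [g_prox_real S y]; exact EReal.coe_ne_top _

/-- The real-valued descent inequality from the prox minimization property. -/
lemma mEnv_le (S : FBEData n) (y z : Euc n) (hz : S.g z ≠ ⊤) :
    mEnv S y ≤ (S.g z).toReal + (1 / (2 * S.γ)) * ‖z - y‖ ^ 2 := by
  have h := S.hprox_min y z
  rw [g_prox_real S y, ← EReal.coe_toReal hz (S.hg_nebot z), ← EReal.coe_add, ← EReal.coe_add,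
    EReal.coe_le_coe_iff] at h
  exact h

/-- Quadratic upper bound for the Moreau envelope. -/
lemma mEnv_quad (S : FBEData n) (y y' : Euc n) :
    mEnv S y' ≤ mEnv S y + ⟪GmEnv S y, y' - y⟫_ℝ + (1 / (2 * S.γ)) * ‖y' - y‖ ^ 2 := by
  have h := mEnv_le S y' (S.prox y) (g_prox_ne_top S y)
  have hγ : S.γ ≠ 0 := S.hγ0.ne'
  have e1 : S.prox y - y' = (S.prox y - y) - (y' - y) := by abel
  rw [e1, norm_sub_sq_real] at h
  have e2 : ⟪GmEnv S y, y' - y⟫_ℝ = (1 / S.γ) * ⟪y - S.prox y, y' - y⟫_ℝ := by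
    rw [GmEnv, real_inner_smul_left]
  have e3 : ⟪y - S.prox y, y' - y⟫_ℝ = - ⟪S.prox y - y, y' - y⟫_ℝ := by
    rw [show y - S.prox y = -(S.prox y - y) by abel, inner_neg_left]
  simp only [mEnv] at h ⊢
  rw [e2, e3]
  have : (1 / (2 * S.γ)) * (‖S.prox y - y‖ ^ 2 - 2 * ⟪S.prox y - y, y' - y⟫_ℝ + ‖y' - y‖ ^ 2)
      = (1 / (2 * S.γ)) * ‖S.prox y - y‖ ^ 2 + (1 / S.γ) * (- ⟪S.prox y - y, y' - y⟫_ℝ)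
        + (1 / (2 * S.γ)) * ‖y' - y‖ ^ 2 := by
    field_simp; ring
  linarith [h, this.ge, this.le]


lemma key_id (S : FBEData n) (x u : Euc n) :
    S.f x + ⟪S.f' x, u - x⟫_ℝ + (1 / (2 * S.γ)) * ‖u - x‖ ^ 2
      = (S.f x - (S.γ / 2) * ‖S.f' x‖ ^ 2)
        + (1 / (2 * S.γ)) * ‖u - (x - S.γ • S.f' x)‖ ^ 2 := by
  have hγ : S.γ ≠ 0 := S.hγ0.ne'
  have e : u - (x - S.γ • S.f' x) = (u - x) + S.γ • S.f' x := by abel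
  rw [e, norm_add_sq_real, real_inner_smul_right, norm_smul,
    real_inner_comm (S.f' x) (u - x), Real.norm_eq_abs, mul_pow, sq_abs]
  field_simp
  ring

lemma fbeE_eq (S : FBEData n) (x : Euc n) :
    S.fbeE x = ((S.f x - (S.γ / 2) * ‖S.f' x‖ ^ 2 + mEnv S (x - S.γ • S.f' x) : ℝ) : EReal) := by
  set y := x - S.γ • S.f' x with hy
  rw [FBEData.fbeE]
  apply le_antisymm
  · refine le_trans (iInf_le _ (S.prox y)) ?_
    rw [g_prox_real S y, ← EReal.coe_add, EReal.coe_le_coe_iff, key_id S x (S.prox y)]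
    simp only [mEnv, ← hy]
    linarith
  · refine le_iInf fun u => ?_
    by_cases hu : S.g u = ⊤
    · rw [hu, EReal.coe_add_top]
      exact le_top
    · rw [← EReal.coe_toReal hu (S.hg_nebot u), ← EReal.coe_add, EReal.coe_le_coe_iff,
        key_id S x u]
      have h := mEnv_le S y u hu
      linarith

lemma fbe_eq (S : FBEData n) (x : Euc n) :
    S.fbe x = S.f x - (S.γ / 2) * ‖S.f' x‖ ^ 2 + mEnv S (x - S.γ • S.f' x) := by
  rw [FBEData.fbe, fbeE_eq, EReal.toReal_coe]

lemma mEnv_hasFDerivAt (S : FBEData n) {y₀ : Euc n} {K r : ℝ} (hK : 0 ≤ K)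
    (hlip : ∀ y ∈ Metric.ball y₀ r, ∀ y' ∈ Metric.ball y₀ r,
      ‖S.prox y' - S.prox y‖ ≤ K * ‖y' - y‖)
    {y : Euc n} (hy : y ∈ Metric.ball y₀ r) :
    HasFDerivAt (mEnv S) (InnerProductSpace.toDual ℝ (Euc n) (GmEnv S y)) y := by
  have hγ : (0:ℝ) < S.γ := S.hγ0
  have hCpos : (0:ℝ) < 1 / (2 * S.γ) + (1 + K) / S.γ := by positivity
  rw [hasFDerivAt_iff_isLittleO, Asymptotics.isLittleO_iff]
  intro c hc
  have hδ : 0 < c / (1 / (2 * S.γ) + (1 + K) / S.γ) := div_pos hc hCpos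
  filter_upwards [Metric.isOpen_ball.mem_nhds hy, Metric.ball_mem_nhds y hδ]
    with y' hy' hy'δ
  rw [InnerProductSpace.toDual_apply_apply, Real.norm_eq_abs]
  have hnorm : ‖y' - y‖ < c / (1 / (2 * S.γ) + (1 + K) / S.γ) := by
    rwa [← dist_eq_norm, ← Metric.mem_ball]
  have hup : mEnv S y' - mEnv S y - ⟪GmEnv S y, y' - y⟫_ℝ ≤ (1 / (2 * S.γ)) * ‖y' - y‖ ^ 2 := by
    have := mEnv_quad S y y'
    linarith
  have hGm : ‖GmEnv S y' - GmEnv S y‖ ≤ ((1 + K) / S.γ) * ‖y' - y‖ := by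
    have e : GmEnv S y' - GmEnv S y = (1 / S.γ) • ((y' - y) - (S.prox y' - S.prox y)) := by
      simp only [GmEnv, ← smul_sub]
      congr 1
      abel
    rw [e, norm_smul, Real.norm_eq_abs, abs_of_pos (by positivity)]
    have h1 : ‖(y' - y) - (S.prox y' - S.prox y)‖ ≤ ‖y' - y‖ + K * ‖y' - y‖ :=
      le_trans (norm_sub_le _ _) (by linarith [hlip y hy y' hy'])
    calc (1 / S.γ) * ‖(y' - y) - (S.prox y' - S.prox y)‖
        ≤ (1 / S.γ) * ((1 + K) * ‖y' - y‖) := by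
          apply mul_le_mul_of_nonneg_left (by linarith) (by positivity)
      _ = ((1 + K) / S.γ) * ‖y' - y‖ := by ring
  have hdown : -((1 / (2 * S.γ) + (1 + K) / S.γ) * ‖y' - y‖ ^ 2)
      ≤ mEnv S y' - mEnv S y - ⟪GmEnv S y, y' - y⟫_ℝ := by
    have hq := mEnv_quad S y' y
    have e1 : ⟪GmEnv S y', y - y'⟫_ℝ = - ⟪GmEnv S y', y' - y⟫_ℝ := by
      rw [show y - y' = -(y' - y) by abel, inner_neg_right]
    have e2 : ‖y - y'‖ = ‖y' - y‖ := norm_sub_rev _ _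
    rw [e1, e2] at hq
    have hinner : ⟪GmEnv S y', y' - y⟫_ℝ - ⟪GmEnv S y, y' - y⟫_ℝ
        ≥ -(((1 + K) / S.γ) * ‖y' - y‖ * ‖y' - y‖) := by
      have h1 := abs_real_inner_le_norm (GmEnv S y' - GmEnv S y) (y' - y)
      have h2 := neg_abs_le ⟪GmEnv S y' - GmEnv S y, y' - y⟫_ℝ
      rw [inner_sub_left] at h1 h2
      nlinarith [norm_nonneg (y' - y), hGm]
    have h3 : (1 / (2 * S.γ) + (1 + K) / S.γ) * ‖y' - y‖ ^ 2
        = 1 / (2 * S.γ) * ‖y' - y‖ ^ 2 + ((1 + K) / S.γ) * ‖y' - y‖ * ‖y' - y‖ := by ring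
    linarith
  have habs : |mEnv S y' - mEnv S y - ⟪GmEnv S y, y' - y⟫_ℝ|
      ≤ (1 / (2 * S.γ) + (1 + K) / S.γ) * ‖y' - y‖ ^ 2 := by
    rw [abs_le]
    refine ⟨hdown, le_trans hup ?_⟩
    apply mul_le_mul_of_nonneg_right _ (by positivity)
    have : (0:ℝ) ≤ (1 + K) / S.γ := by positivity
    linarith
  calc |mEnv S y' - mEnv S y - ⟪GmEnv S y, y' - y⟫_ℝ|
      ≤ (1 / (2 * S.γ) + (1 + K) / S.γ) * ‖y' - y‖ ^ 2 := habs
    _ = ((1 / (2 * S.γ) + (1 + K) / S.γ) * ‖y' - y‖) * ‖y' - y‖ := by ring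
    _ ≤ c * ‖y' - y‖ := by
        apply mul_le_mul_of_nonneg_right _ (norm_nonneg _)
        calc (1 / (2 * S.γ) + (1 + K) / S.γ) * ‖y' - y‖
            ≤ (1 / (2 * S.γ) + (1 + K) / S.γ) * (c / (1 / (2 * S.γ) + (1 + K) / S.γ)) :=
              mul_le_mul_of_nonneg_left hnorm.le hCpos.le
          _ = c := by field_simp

end FBEAux
set_option maxHeartbeats 1000000 in
/-- around a critical point `x⋆`, if `f` is `C³` near `x⋆` and `prox_{γg}` is `C¹`
near the forward point `x⋆ - γ∇f(x⋆)`, then `R_γ` is continuously differentiable and `φ_γ` is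
twice continuously differentiable on a neighborhood `U` of `x⋆`, with
`JR_γ(x) = (1/γ)(I - P_γ(x) Q_γ(x))` and `∇²φ_γ(x) = Q_γ(x) JR_γ(x) + M_γ(x)`,
where `Q_γ(x) = I - γ∇²f(x)`, `P_γ(x) = Jprox_{γg}(x - γ∇f(x))`, and
`M_γ(x) s = -γ (∇³f(x) s)(R_γ(x))`. -/
theorem stmt4 {n : ℕ} (S : FBEData n)
    -- f is twice continuously differentiable with locally Lipschitz Hessian f''
    (f'' : Euc n → (Euc n →L[ℝ] Euc n))
    (hf'' : ∀ x, HasFDerivAt S.f' (f'' x) x)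
    (hf''cont : Continuous f'') (hf''lip : LocallyLipschitz f'')
    -- x⋆ is a critical point
    (xs : Euc n) (hcrit : S.T xs = xs)
    -- f is three times continuously differentiable on a neighborhood of x⋆,
    -- with third derivative f3
    (f3 : Euc n → (Euc n →L[ℝ] Euc n →L[ℝ] Euc n))
    (V : Set (Euc n)) (hV : V ∈ 𝓝 xs)
    (hf3 : ∀ x ∈ V, HasFDerivAt f'' (f3 x) x) (hf3cont : ContinuousOn f3 V)
    -- prox is continuously differentiable on a neighborhood of x⋆ - γ∇f(x⋆), with Jacobian P
    (P : Euc n → (Euc n →L[ℝ] Euc n))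
    (W : Set (Euc n)) (hW : W ∈ 𝓝 (xs - S.γ • S.f' xs))
    (hP : ∀ y ∈ W, HasFDerivAt S.prox (P y) y) (hPcont : ContinuousOn P W) :
    ∃ U : Set (Euc n), IsOpen U ∧ xs ∈ U ∧
      ∃ JR : Euc n → (Euc n →L[ℝ] Euc n),
        (∀ x ∈ U, HasFDerivAt S.R (JR x) x) ∧ ContinuousOn JR U ∧
        (∀ x ∈ U, JR x = (1 / S.γ) •
            (ContinuousLinearMap.id ℝ (Euc n)
              - (P (x - S.γ • S.f' x)).comp
                  (ContinuousLinearMap.id ℝ (Euc n) - S.γ • f'' x))) ∧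
        ∃ G : Euc n → Euc n, ∃ H : Euc n → (Euc n →L[ℝ] Euc n),
          (∀ x ∈ U, HasGradientAt S.fbe (G x) x) ∧
          (∀ x ∈ U, HasFDerivAt G (H x) x) ∧ ContinuousOn H U ∧
          (∀ x ∈ U, ∀ v : Euc n,
            H x v = (ContinuousLinearMap.id ℝ (Euc n) - S.γ • f'' x) (JR x v)
              - S.γ • (f3 x v) (S.R x)) := by
  classical
  open FBEAux in
  -- continuity of f'
  have hf'cont : Continuous S.f' := by
    rw [continuous_iff_continuousAt]
    exact fun x => (hf'' x).differentiableAt.continuousAt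
  set F : Euc n → Euc n := fun x => x - S.γ • S.f' x with hFdef
  have hFcont : Continuous F := continuous_id.sub (hf'cont.const_smul S.γ)
  have hFD : ∀ x, HasFDerivAt F (ContinuousLinearMap.id ℝ (Euc n) - S.γ • f'' x) x := fun x =>
    (hasFDerivAt_id x).sub ((hf'' x).const_smul S.γ)
  -- a ball around the forward point inside W
  obtain ⟨ε, hεpos, hεW⟩ := Metric.mem_nhds_iff.mp hW
  have hrpos : 0 < ε / 3 := by positivity
  have hballW : Metric.ball (F xs) (2 * (ε / 3)) ⊆ W := by
    intro z hz
    apply hεW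
    rw [Metric.mem_ball] at hz ⊢
    linarith
  have hcbW : Metric.closedBall (F xs) (2 * (ε / 3)) ⊆ W := by
    intro z hz
    apply hεW
    rw [Metric.mem_closedBall] at hz
    rw [Metric.mem_ball]
    linarith
  -- bound on the prox Jacobian on the closed ball
  obtain ⟨K₀, hK₀⟩ := (isCompact_closedBall (F xs) (2 * (ε / 3))).exists_bound_of_continuousOn
    (hPcont.mono hcbW)
  set K : ℝ := max K₀ 0 with hKdef
  have hK : 0 ≤ K := le_max_right _ _
  -- prox is K-Lipschitz on the ball
  have hlip : ∀ y ∈ Metric.ball (F xs) (2 * (ε / 3)), ∀ y' ∈ Metric.ball (F xs) (2 * (ε / 3)),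
      ‖S.prox y' - S.prox y‖ ≤ K * ‖y' - y‖ := by
    intro y hy y' hy'
    refine Convex.norm_image_sub_le_of_norm_hasFDerivWithin_le
      (f' := P) (fun z hz => (hP z (hballW hz)).hasFDerivWithinAt)
      (fun z hz => ?_) (convex_ball _ _) hy hy'
    exact le_trans (hK₀ z (Metric.ball_subset_closedBall hz)) (le_max_left _ _)
  -- the Moreau envelope has gradient GmEnv on the ball
  have mD : ∀ y ∈ Metric.ball (F xs) (2 * (ε / 3)),
      HasFDerivAt (mEnv S) (InnerProductSpace.toDual ℝ (Euc n) (GmEnv S y)) y :=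
    fun y hy => mEnv_hasFDerivAt S hK hlip hy
  -- the neighborhood U
  refine ⟨interior V ∩ F ⁻¹' (Metric.ball (F xs) (2 * (ε / 3))), ?_, ?_, ?_⟩
  · exact isOpen_interior.inter (Metric.isOpen_ball.preimage hFcont)
  · exact ⟨mem_interior_iff_mem_nhds.mpr hV, by
      simp only [Set.mem_preimage]
      exact Metric.mem_ball_self (by positivity)⟩
  set U : Set (Euc n) := interior V ∩ F ⁻¹' (Metric.ball (F xs) (2 * (ε / 3))) with hUdef
  have hUV : U ⊆ V := fun x hx => interior_subset hx.1
  have hUF : ∀ x ∈ U, F x ∈ Metric.ball (F xs) (2 * (ε / 3)) := fun x hx => hx.2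
  set JR : Euc n → (Euc n →L[ℝ] Euc n) := fun x => (1 / S.γ) •
      (ContinuousLinearMap.id ℝ (Euc n)
        - (P (F x)).comp (ContinuousLinearMap.id ℝ (Euc n) - S.γ • f'' x)) with hJRdef
  have hJR : ∀ x ∈ U, HasFDerivAt S.R (JR x) x := by
    intro x hx
    have h1 : HasFDerivAt (fun z => S.prox (F z))
        ((P (F x)).comp (ContinuousLinearMap.id ℝ (Euc n) - S.γ • f'' x)) x :=
      (hP (F x) (hballW (hUF x hx))).comp x (hFD x)
    have h2 := ((hasFDerivAt_id x).sub h1).const_smul (1 / S.γ)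
    exact h2
  have hJRc : ContinuousOn JR U := by
    have hPF : ContinuousOn (fun x => P (F x)) U :=
      hPcont.comp hFcont.continuousOn (fun x hx => hballW (hUF x hx))
    have hQ : ContinuousOn (fun x => ContinuousLinearMap.id ℝ (Euc n) - S.γ • f'' x) U :=
      (continuous_const.sub (hf''cont.const_smul S.γ)).continuousOn
    exact ((continuousOn_const.sub (hPF.clm_comp hQ)).const_smul (1 / S.γ))
  refine ⟨JR, hJR, hJRc, fun x _ => rfl, ?_⟩
  -- the gradient and Hessian of the FBE
  set G : Euc n → Euc n := fun x => S.R x - S.γ • (f'' x) (S.R x) with hGdef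
  set H : Euc n → (Euc n →L[ℝ] Euc n) := fun x =>
    (ContinuousLinearMap.id ℝ (Euc n) - S.γ • f'' x).comp (JR x)
      - S.γ • ((f3 x).flip (S.R x)) with hHdef
  -- symmetry of the Hessian
  have hsym : ∀ x : Euc n, ∀ v w : Euc n, ⟪(f'' x) v, w⟫ = ⟪(f'' x) w, v⟫ := by
    intro x v w
    have hfev : ∀ᶠ y in 𝓝 x, HasFDerivAt S.f
        ((innerSL ℝ : Euc n →L[ℝ] Euc n →L[ℝ] ℝ) (S.f' y)) y := by
      refine Filter.Eventually.of_forall fun y => ?_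
      have h := (S.hf y).hasFDerivAt
      have e : (innerSL ℝ : Euc n →L[ℝ] Euc n →L[ℝ] ℝ) (S.f' y)
          = InnerProductSpace.toDual ℝ (Euc n) (S.f' y) := by
        ext v
        simp [InnerProductSpace.toDual_apply_apply]
      rw [e]
      exact h
    have hx : HasFDerivAt (fun y => (innerSL ℝ : Euc n →L[ℝ] Euc n →L[ℝ] ℝ) (S.f' y))
        ((innerSL ℝ : Euc n →L[ℝ] Euc n →L[ℝ] ℝ).comp (f'' x)) x :=
      ((innerSL ℝ : Euc n →L[ℝ] Euc n →L[ℝ] ℝ).hasFDerivAt).comp x (hf'' x)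
    have := second_derivative_symmetric_of_eventually_of_real hfev hx v w
    simpa using this
  -- GmEnv at the forward point
  have hGmF : ∀ x : Euc n, GmEnv S (F x) = S.R x - S.f' x := by
    intro x
    have hγ' : (1 / S.γ) * S.γ = 1 := by rw [one_div, inv_mul_cancel₀ S.hγ0.ne']
    simp only [GmEnv, FBEData.R, FBEData.T]
    rw [show x - S.γ • S.f' x - S.prox (x - S.γ • S.f' x)
        = (x - S.prox (x - S.γ • S.f' x)) - S.γ • S.f' x from by abel,
      smul_sub, smul_smul, hγ', one_smul]
  -- the gradient of the FBE
  have hG : ∀ x ∈ U, HasGradientAt S.fbe (G x) x := by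
    intro x hx
    have hfbe : S.fbe = fun z => S.f z - (S.γ / 2) * ‖S.f' z‖ ^ 2 + mEnv S (F z) :=
      funext fun z => fbe_eq S z
    rw [hfbe, hasGradientAt_iff_hasFDerivAt]
    have h1 : HasFDerivAt S.f (InnerProductSpace.toDual ℝ (Euc n) (S.f' x)) x :=
      (S.hf x).hasFDerivAt
    have h2 : HasFDerivAt (fun z => ‖S.f' z‖ ^ 2)
        ((fderivInnerCLM ℝ (S.f' x, S.f' x)).comp ((f'' x).prod (f'' x))) x := by
      have := (hf'' x).inner ℝ (hf'' x)
      simpa only [real_inner_self_eq_norm_sq] using this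
    have h3 : HasFDerivAt (fun z => mEnv S (F z))
        ((InnerProductSpace.toDual ℝ (Euc n) (GmEnv S (F x))).comp
          (ContinuousLinearMap.id ℝ (Euc n) - S.γ • f'' x)) x :=
      (mD (F x) (hUF x hx)).comp x (hFD x)
    have hsum := (h1.sub (h2.const_mul (S.γ / 2))).add h3
    refine hsum.congr_fderiv ?_
    ext v
    simp only [ContinuousLinearMap.add_apply, ContinuousLinearMap.sub_apply,
      ContinuousLinearMap.smul_apply, ContinuousLinearMap.comp_apply,
      ContinuousLinearMap.prod_apply, ContinuousLinearMap.id_apply,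
      fderivInnerCLM_apply, InnerProductSpace.toDual_apply_apply, hGmF x,
      smul_eq_mul]
    have e1 : ⟪(f'' x) v, S.f' x⟫ = ⟪S.f' x, (f'' x) v⟫ := real_inner_comm _ _
    have e2 : ⟪S.R x - S.f' x, v - S.γ • (f'' x) v⟫
        = ⟪S.R x, v⟫ - ⟪S.f' x, v⟫
          - S.γ * ⟪S.R x, (f'' x) v⟫ + S.γ * ⟪S.f' x, (f'' x) v⟫ := by
      rw [inner_sub_left, inner_sub_right, inner_sub_right, real_inner_smul_right,
        real_inner_smul_right]
      ring
    have e3 : ⟪S.R x, (f'' x) v⟫ = ⟪(f'' x) (S.R x), v⟫ := by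
      rw [real_inner_comm]
      exact hsym x v (S.R x)
    have e4 : ⟪S.R x - S.γ • (f'' x) (S.R x), v⟫
        = ⟪S.R x, v⟫ - S.γ * ⟪(f'' x) (S.R x), v⟫ := by
      rw [inner_sub_left, real_inner_smul_left]
    rw [e1, e2, e3, e4]
    ring
  refine ⟨G, H, hG, ?_, ?_, ?_⟩
  · -- differentiability of G
    intro x hx
    have hRd := hJR x hx
    have happ : HasFDerivAt (fun z => (f'' z) (S.R z))
        ((f'' x).comp (JR x) + (f3 x).flip (S.R x)) x :=
      (hf3 x (hUV hx)).clm_apply hRd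
    have hfin := hRd.sub (happ.const_smul S.γ)
    refine hfin.congr_fderiv ?_
    refine ContinuousLinearMap.ext fun v => ?_
    simp only [hHdef, ContinuousLinearMap.sub_apply, ContinuousLinearMap.comp_apply,
      ContinuousLinearMap.smul_apply, ContinuousLinearMap.add_apply,
      ContinuousLinearMap.id_apply, ContinuousLinearMap.flip_apply]
    module
  · -- continuity of H
    have hRcont : ContinuousOn S.R U := fun x hx =>
      ((hJR x hx).continuousAt).continuousWithinAt
    have hQ : ContinuousOn (fun x => ContinuousLinearMap.id ℝ (Euc n) - S.γ • f'' x) U :=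
      (continuous_const.sub (hf''cont.const_smul S.γ)).continuousOn
    have hterm1 : ContinuousOn
        (fun x => (ContinuousLinearMap.id ℝ (Euc n) - S.γ • f'' x).comp (JR x)) U :=
      hQ.clm_comp hJRc
    have hf3U : ContinuousOn (fun x => (f3 x).flip) U :=
      ((ContinuousLinearMap.flipₗᵢ ℝ (Euc n) (Euc n) (Euc n)).continuous.comp_continuousOn
        (hf3cont.mono hUV))
    have hterm2 : ContinuousOn (fun x => (f3 x).flip (S.R x)) U := hf3U.clm_apply hRcont
    exact hterm1.sub (hterm2.const_smul S.γ)
  · -- the formula for H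
    intro x hx v
    simp only [hHdef, ContinuousLinearMap.sub_apply, ContinuousLinearMap.comp_apply,
      ContinuousLinearMap.smul_apply, ContinuousLinearMap.flip_apply]
end
end

section
/- Let n ∈ ℕ, γ > 0, and let S ⊆ ℝ^n be a linear subspace with orthogonal projection matrix Π_S. Let M be a symmetric n×n real matrix with range(M) ⊆ S and S^⊥ ⊆ ker(M), and suppose the matrix I + γM is positive definite. Let Q be a symmetric positive definite n×n matrix and set P := Π_S (I + γM)^{−1} Π_S. Then the matrix Q − QPQ is positive semidefinite if and only if the matrix Π_S (I + γM − Q) Π_S is positive semidefinite. -/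
open scoped Matrix

noncomputable section

/-- Cauchy–Schwarz for a positive semidefinite symmetric real matrix. -/
private lemma cs_psd {n : ℕ} (R : Matrix (Fin n) (Fin n) ℝ) (hsym : Rᵀ = R)
    (hpsd : ∀ x : Fin n → ℝ, 0 ≤ x ⬝ᵥ R *ᵥ x) (a b : Fin n → ℝ) :
    (a ⬝ᵥ R *ᵥ b) ^ 2 ≤ (a ⬝ᵥ R *ᵥ a) * (b ⬝ᵥ R *ᵥ b) := by
  have hswap : ∀ u v : Fin n → ℝ, u ⬝ᵥ R *ᵥ v = v ⬝ᵥ R *ᵥ u := by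
    intro u v
    rw [Matrix.dotProduct_mulVec]
    conv_lhs => rw [← hsym]
    rw [Matrix.vecMul_transpose, dotProduct_comm]
  have key : ∀ t : ℝ,
      0 ≤ (b ⬝ᵥ R *ᵥ b) * (t * t) + (2 * (a ⬝ᵥ R *ᵥ b)) * t + (a ⬝ᵥ R *ᵥ a) := by
    intro t
    have h := hpsd (a + t • b)
    have hexp : (a + t • b) ⬝ᵥ R *ᵥ (a + t • b)
        = (b ⬝ᵥ R *ᵥ b) * (t * t) + (2 * (a ⬝ᵥ R *ᵥ b)) * t + (a ⬝ᵥ R *ᵥ a) := by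
      rw [Matrix.mulVec_add, Matrix.mulVec_smul, add_dotProduct,
        smul_dotProduct, dotProduct_add, dotProduct_add,
        dotProduct_smul, dotProduct_smul, hswap b a]
      ring_nf
    linarith [hexp ▸ h]
  have hd := discrim_le_zero key
  rw [discrim] at hd
  nlinarith [hd]

/-- let `S ⊆ ℝⁿ` be a subspace with orthogonal projection matrix `Π`, `M` a
symmetric matrix with `range M ⊆ S` and `S^⊥ ⊆ ker M` such that `I + γM` is positive definite,
`Q` symmetric positive definite, and `P := Π (I + γM)⁻¹ Π`.  Then `Q - QPQ` is positive
semidefinite iff `Π (I + γM - Q) Π` is positive semidefinite. -/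
theorem stmt6 {n : ℕ} (γ : ℝ) (hγ : 0 < γ)
    (S : Submodule ℝ (Fin n → ℝ))
    (PiS M Q : Matrix (Fin n) (Fin n) ℝ)
    -- PiS is the orthogonal projection onto S
    (hPiSsym : PiS.IsSymm)
    (hPiSem : ∀ x : Fin n → ℝ, PiS.mulVec x ∈ S)
    (hPiSfix : ∀ x ∈ S, PiS.mulVec x = x)
    -- M is symmetric with range(M) ⊆ S and S^⊥ ⊆ ker(M)
    (hMsym : M.IsSymm)
    (hMrange : ∀ x : Fin n → ℝ, M.mulVec x ∈ S)
    (hMker : ∀ x : Fin n → ℝ, (∀ y ∈ S, x ⬝ᵥ y = 0) → M.mulVec x = 0)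
    -- I + γM is positive definite
    (hIM : (1 + γ • M).PosDef)
    -- Q is symmetric positive definite
    (hQsym : Q.IsSymm) (hQpd : Q.PosDef) :
    (Q - Q * (PiS * (1 + γ • M)⁻¹ * PiS) * Q).PosSemidef
      ↔ (PiS * (1 + γ • M - Q) * PiS).PosSemidef := by
  set A : Matrix (Fin n) (Fin n) ℝ := 1 + γ • M with hA
  -- basic symmetry facts
  have hAsym : Aᵀ = A := by
    rw [hA, Matrix.transpose_add, Matrix.transpose_one, Matrix.transpose_smul, hMsym]
  have hQsymT : Qᵀ = Q := hQsym
  have hPsymT : PiSᵀ = PiS := hPiSsym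
  have hAdet : IsUnit A.det := hIM.det_pos.ne'.isUnit
  have hAAinv : A * A⁻¹ = 1 := Matrix.mul_nonsing_inv A hAdet
  have hAinvA : A⁻¹ * A = 1 := Matrix.nonsing_inv_mul A hAdet
  have hAinvsym : (A⁻¹)ᵀ = A⁻¹ := by rw [Matrix.transpose_nonsing_inv, hAsym]
  have hAinvpd : (A⁻¹).PosDef := hIM.inv
  -- swap lemma for symmetric matrices
  have hswap : ∀ (R : Matrix (Fin n) (Fin n) ℝ), Rᵀ = R →
      ∀ u v : Fin n → ℝ, u ⬝ᵥ R *ᵥ v = R *ᵥ u ⬝ᵥ v := by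
    intro R hR u v
    rw [Matrix.dotProduct_mulVec]
    conv_lhs => rw [← hR]
    rw [Matrix.vecMul_transpose]
  -- A preserves S
  have hApres : ∀ s ∈ S, A *ᵥ s ∈ S := by
    intro s hs
    rw [hA, Matrix.add_mulVec, Matrix.one_mulVec, Matrix.smul_mulVec]
    exact S.add_mem hs (S.smul_mem γ (hMrange s))
  -- x - Π x is orthogonal to S
  have hperp : ∀ (x : Fin n → ℝ), ∀ u ∈ S, (x - PiS *ᵥ x) ⬝ᵥ u = 0 := by
    intro x u hu
    rw [sub_dotProduct, ← hswap PiS hPsymT, hPiSfix u hu, sub_self]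
  -- A⁻¹ preserves S
  have hAinvpres : ∀ s ∈ S, A⁻¹ *ᵥ s ∈ S := by
    intro s hs
    set y := A⁻¹ *ᵥ s with hy
    have hAy : A *ᵥ y = s := by
      rw [hy, Matrix.mulVec_mulVec, hAAinv, Matrix.one_mulVec]
    have hMz : M *ᵥ (y - PiS *ᵥ y) = 0 := hMker _ (hperp y)
    have hAz : A *ᵥ (y - PiS *ᵥ y) = y - PiS *ᵥ y := by
      rw [hA, Matrix.add_mulVec, Matrix.one_mulVec, Matrix.smul_mulVec, hMz,
        smul_zero, add_zero]
    have hsplit : s = A *ᵥ (PiS *ᵥ y) + (y - PiS *ᵥ y) := by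
      conv_rhs => rw [← hAz]
      rw [← Matrix.mulVec_add]
      have hyy : PiS *ᵥ y + (y - PiS *ᵥ y) = y := by abel
      rw [hyy, hAy]
    have hmem : y - PiS *ᵥ y ∈ S := by
      have : y - PiS *ᵥ y = s - A *ᵥ (PiS *ᵥ y) := by rw [hsplit]; abel
      rw [this]
      exact S.sub_mem hs (hApres _ (hPiSem y))
    have hzero : y - PiS *ᵥ y = 0 := by
      have h0 : (y - PiS *ᵥ y) ⬝ᵥ (y - PiS *ᵥ y) = 0 := hperp y _ hmem
      exact dotProduct_self_eq_zero.mp h0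
    have : y = PiS *ᵥ y := by
      have := sub_eq_zero.mp hzero
      exact this
    rw [hy] at this ⊢
    rw [this]
    exact hPiSem y
  -- positive semidefiniteness of the quadratic forms
  have hQpsd : ∀ x : Fin n → ℝ, 0 ≤ x ⬝ᵥ Q *ᵥ x := by
    intro x
    have := hQpd.posSemidef.dotProduct_mulVec_nonneg x
    simpa using this
  have hApsd : ∀ x : Fin n → ℝ, 0 ≤ x ⬝ᵥ A *ᵥ x := by
    intro x
    have := hIM.posSemidef.dotProduct_mulVec_nonneg x
    simpa [hA] using this
  have hAinvpsd : ∀ x : Fin n → ℝ, 0 ≤ x ⬝ᵥ A⁻¹ *ᵥ x := by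
    intro x
    have := hAinvpd.posSemidef.dotProduct_mulVec_nonneg x
    simpa using this
  constructor
  · -- Q - QPQ psd → Π(A - Q)Π psd
    intro h
    have h2 : ∀ x : Fin n → ℝ, 0 ≤ x ⬝ᵥ (Q - Q * (PiS * A⁻¹ * PiS) * Q) *ᵥ x := by
      intro x
      have := h.dotProduct_mulVec_nonneg x
      simpa using this
    refine Matrix.PosSemidef.of_dotProduct_mulVec_nonneg ?_ ?_
    · -- Hermitian
      show (PiS * (A - Q) * PiS)ᴴ = _
      rw [Matrix.conjTranspose_eq_transpose_of_trivial, Matrix.transpose_mul,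
        Matrix.transpose_mul, Matrix.transpose_sub, hAsym, hQsymT, hPsymT, Matrix.mul_assoc]
    · intro x
      have hx : star x = x := by simp
      rw [hx]
      set s : Fin n → ℝ := PiS *ᵥ x with hs
      have hsS : s ∈ S := hPiSem x
      have hss : PiS *ᵥ s = s := hPiSfix s hsS
      -- reduce goal to s ⬝ (A - Q) s
      have hgoal : x ⬝ᵥ (PiS * (A - Q) * PiS) *ᵥ x = s ⬝ᵥ (A - Q) *ᵥ s := by
        rw [← Matrix.mulVec_mulVec, ← Matrix.mulVec_mulVec, hswap PiS hPsymT, ← hs]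
      rw [hgoal, Matrix.sub_mulVec, dotProduct_sub, sub_nonneg]
      -- quantities
      set u : ℝ := s ⬝ᵥ Q *ᵥ s with hu
      set t : ℝ := s ⬝ᵥ A *ᵥ s with ht
      set w : Fin n → ℝ := PiS *ᵥ (Q *ᵥ s) with hw
      have hu0 : 0 ≤ u := hQpsd s
      have ht0 : 0 ≤ t := hApsd s
      -- from hypothesis at s : (Qs) ⬝ P (Qs) ≤ u
      have he : w ⬝ᵥ A⁻¹ *ᵥ w ≤ u := by
        have := h2 s
        rw [Matrix.sub_mulVec, dotProduct_sub, sub_nonneg] at this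
        have heq : s ⬝ᵥ (Q * (PiS * A⁻¹ * PiS) * Q) *ᵥ s = w ⬝ᵥ A⁻¹ *ᵥ w := by
          rw [← Matrix.mulVec_mulVec, ← Matrix.mulVec_mulVec, ← Matrix.mulVec_mulVec,
            ← Matrix.mulVec_mulVec, hswap Q hQsymT, hswap PiS hPsymT]
        rw [heq] at this
        exact le_trans this (le_of_eq hu.symm)
      have he0 : 0 ≤ w ⬝ᵥ A⁻¹ *ᵥ w := hAinvpsd w
      -- u = (A s) ⬝ A⁻¹ w
      have hrep : (A *ᵥ s) ⬝ᵥ A⁻¹ *ᵥ w = u := by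
        rw [Matrix.dotProduct_mulVec, ← Matrix.mulVec_transpose, hAinvsym,
          Matrix.mulVec_mulVec, hAinvA, Matrix.one_mulVec, hw,
          hswap PiS hPsymT, hss, hu]
      -- (A s) ⬝ A⁻¹ (A s) = t
      have hrt : (A *ᵥ s) ⬝ᵥ A⁻¹ *ᵥ (A *ᵥ s) = t := by
        rw [Matrix.dotProduct_mulVec, ← Matrix.mulVec_transpose, hAinvsym,
          Matrix.mulVec_mulVec, hAinvA, Matrix.one_mulVec, ht]
      have hcs := cs_psd A⁻¹ hAinvsym hAinvpsd (A *ᵥ s) w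
      rw [hrep, hrt] at hcs
      -- u^2 ≤ t * (w A⁻¹ w) ≤ t * u ; conclude u ≤ t
      have hut : u ^ 2 ≤ t * u := le_trans hcs (by nlinarith)
      rcases eq_or_lt_of_le hu0 with h0 | h0
      · rw [hu, ht] at *; linarith
      · nlinarith
  · -- Π(A - Q)Π psd → Q - QPQ psd
    intro h
    have h2 : ∀ s ∈ S, s ⬝ᵥ Q *ᵥ s ≤ s ⬝ᵥ A *ᵥ s := by
      intro s hsS
      have := h.dotProduct_mulVec_nonneg s
      have hx : star s = s := by simp
      rw [hx] at this
      have hss : PiS *ᵥ s = s := hPiSfix s hsS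
      rw [← Matrix.mulVec_mulVec, ← Matrix.mulVec_mulVec, hss, hswap PiS hPsymT, hss,
        Matrix.sub_mulVec, dotProduct_sub, sub_nonneg] at this
      exact this
    refine Matrix.PosSemidef.of_dotProduct_mulVec_nonneg ?_ ?_
    · show (Q - Q * (PiS * A⁻¹ * PiS) * Q)ᴴ = _
      rw [Matrix.conjTranspose_eq_transpose_of_trivial, Matrix.transpose_sub, hQsymT]
      congr 1
      rw [Matrix.transpose_mul, Matrix.transpose_mul, Matrix.transpose_mul,
        Matrix.transpose_mul, hQsymT, hPsymT, hAinvsym]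
      noncomm_ring
    · intro x
      have hx : star x = x := by simp
      rw [hx]
      set z : Fin n → ℝ := Q *ᵥ x with hz
      set y : Fin n → ℝ := A⁻¹ *ᵥ (PiS *ᵥ z) with hy
      have hyS : y ∈ S := hAinvpres _ (hPiSem z)
      have hAy : A *ᵥ y = PiS *ᵥ z := by
        rw [hy, Matrix.mulVec_mulVec, hAAinv, Matrix.one_mulVec]
      set t : ℝ := y ⬝ᵥ A *ᵥ y with ht
      have ht0 : 0 ≤ t := hApsd y
      -- x ⬝ QPQ x = t
      have hqpq : x ⬝ᵥ (Q * (PiS * A⁻¹ * PiS) * Q) *ᵥ x = t := by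
        rw [← Matrix.mulVec_mulVec, ← Matrix.mulVec_mulVec, ← Matrix.mulVec_mulVec,
          ← Matrix.mulVec_mulVec, hswap Q hQsymT, hswap PiS hPsymT, ← hz, ← hy, ← hAy, ht]
        exact dotProduct_comm _ _
      -- t = y ⬝ Q x
      have htq : t = y ⬝ᵥ Q *ᵥ x := by
        rw [ht, hAy, hswap PiS hPsymT, hPiSfix y hyS, hz]
      -- Cauchy–Schwarz for Q
      have hcs := cs_psd Q hQsymT hQpsd y x
      rw [← htq] at hcs
      have hyQ : y ⬝ᵥ Q *ᵥ y ≤ t := h2 y hyS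
      have hxQ : 0 ≤ x ⬝ᵥ Q *ᵥ x := hQpsd x
      have hut : t ^ 2 ≤ t * (x ⬝ᵥ Q *ᵥ x) := le_trans hcs (by nlinarith)
      rw [Matrix.sub_mulVec, dotProduct_sub, sub_nonneg, hqpq]
      rcases eq_or_lt_of_le ht0 with h0 | h0
      · linarith
      · nlinarith
end
end

section
/- Fix σ ∈ (0, γ(1 − γL_f)/2) and μ ∈ (0,1). Let x ∈ ℝ^n with x̄ := T_γ(x) and r := (x − x̄)/γ ≠ 0, let d, s ∈ ℝ^n, and let c ≤ 0 be a real number. Then there exists τ̄ > 0 such that for all τ ∈ [0, τ̄]: φ_γ(x̄ + τ² d + τ s) ≤ φ_γ(x) − σ‖r‖² + (μ/2) τ² c. -/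
noncomputable section

open scoped RealInnerProductSpace
open Filter Topology Bornology

private lemma descent_aux {n : ℕ} (f : EuclideanSpace ℝ (Fin n) → ℝ)
    (f' : EuclideanSpace ℝ (Fin n) → EuclideanSpace ℝ (Fin n)) (L : ℝ)
    (hf : ∀ x, HasGradientAt f (f' x) x)
    (hlip : LipschitzWith (Real.toNNReal L) f') (hL : 0 ≤ L)
    (x y : EuclideanSpace ℝ (Fin n)) :
    f y ≤ f x + ⟪f' x, y - x⟫ + L / 2 * ‖y - x‖ ^ 2 := by
  set v := y - x with hv
  set g : ℝ → ℝ := fun t => f (x + t • v) - t * ⟪f' x, v⟫ - t ^ 2 * (L / 2) * ‖v‖ ^ 2 with hg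
  have hcurve : ∀ t : ℝ, HasDerivAt (fun t : ℝ => x + t • v) v t := by
    intro t
    simpa using ((hasDerivAt_id t).smul_const v).const_add x
  have hgd : ∀ t : ℝ, HasDerivAt g (⟪f' (x + t • v), v⟫ - ⟪f' x, v⟫ - 2 * t * (L / 2) * ‖v‖ ^ 2) t := by
    intro t
    have h1 : HasDerivAt (fun t : ℝ => f (x + t • v)) ⟪f' (x + t • v), v⟫ t := by
      have := (hf (x + t • v)).hasFDerivAt.comp_hasDerivAt t (hcurve t)
      simp [InnerProductSpace.toDual_apply_apply] at this
      exact this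
    have h2 : HasDerivAt (fun t : ℝ => t * ⟪f' x, v⟫) ⟪f' x, v⟫ t := by
      simpa using (hasDerivAt_id t).mul_const (⟪f' x, v⟫)
    have h3 : HasDerivAt (fun t : ℝ => t ^ 2 * (L / 2) * ‖v‖ ^ 2) (2 * t * (L / 2) * ‖v‖ ^ 2) t := by
      have := ((hasDerivAt_pow 2 t).mul_const (L / 2)).mul_const (‖v‖ ^ 2)
      simpa [mul_comm, mul_assoc, mul_left_comm] using this
    exact (h1.sub h2).sub h3
  have hmono : AntitoneOn g (Set.Icc (0 : ℝ) 1) := by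
    apply antitoneOn_of_deriv_nonpos (convex_Icc 0 1)
    · have hfc : Continuous f := continuous_iff_continuousAt.2 fun z => (hf z).hasFDerivAt.continuousAt
      have : Continuous g := by
        rw [hg]
        exact ((hfc.comp (by continuity)).sub (continuous_id.mul continuous_const)).sub (by continuity)
      exact this.continuousOn
    · intro t ht
      exact (hgd t).differentiableAt.differentiableWithinAt
    · intro t ht
      rw [interior_Icc] at ht
      rw [(hgd t).deriv]
      have hb : ⟪f' (x + t • v) - f' x, v⟫ ≤ L * t * ‖v‖ ^ 2 := by
        calc ⟪f' (x + t • v) - f' x, v⟫ ≤ ‖f' (x + t • v) - f' x‖ * ‖v‖ :=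
              real_inner_le_norm _ _
          _ ≤ L * t * ‖v‖ ^ 2 := by
              have hd := hlip.dist_le_mul (x + t • v) x
              rw [Real.coe_toNNReal _ hL] at hd
              have : dist (x + t • v) x = t * ‖v‖ := by
                rw [dist_eq_norm]
                simp [norm_smul, abs_of_nonneg ht.1.le]
              rw [this, dist_eq_norm] at hd
              nlinarith [norm_nonneg (f' (x + t • v) - f' x), norm_nonneg v, ht.1]
      rw [inner_sub_left] at hb
      nlinarith [ht.1]
  have := hmono (Set.left_mem_Icc.2 zero_le_one) (Set.right_mem_Icc.2 zero_le_one) zero_le_one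
  simp only [hg] at this
  simp only [zero_smul, add_zero, zero_mul, zero_pow, sub_zero, one_smul, one_mul, one_pow] at this
  have hy : x + v = y := by rw [hv]; abel
  rw [hy] at this
  linarith

namespace FBEData

variable {n : ℕ} (S : FBEData n)

private lemma descent (x y : Euc n) :
    S.f y ≤ S.f x + ⟪S.f' x, y - x⟫ + S.Lf / 2 * ‖y - x‖ ^ 2 :=
  descent_aux S.f S.f' S.Lf S.hf S.hf_lip S.hLf.le x y

private lemma gammaLf : S.γ * S.Lf < 1 := by
  have h := (lt_min_iff.1 S.hγ).1
  rw [lt_div_iff₀ S.hLf] at h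
  exact h

/-- The linearization-plus-quadratic model appearing in the FBE. -/
private def lsA (w u : Euc n) : ℝ :=
  S.f w + ⟪S.f' w, u - w⟫ + (1 / (2 * S.γ)) * ‖u - w‖ ^ 2

private lemma fbeE_def' (x : Euc n) :
    S.fbeE x = ⨅ u : Euc n, ((S.lsA x u : ℝ) : EReal) + S.g u := rfl

private lemma lsA_lower {c₀ : ℝ} (hc₀ : ∀ u, (c₀ : EReal) ≤ (S.f u : EReal) + S.g u)
    (w u : Euc n) : (c₀ : EReal) ≤ ((S.lsA w u : ℝ) : EReal) + S.g u := by
  by_cases hgu : S.g u = ⊤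
  · simp [hgu]
  · have h1' := hc₀ u
    lift S.g u to ℝ using ⟨hgu, S.hg_nebot u⟩ with b hb
    have h1 : c₀ ≤ S.f u + b := by exact_mod_cast h1'
    have h2 := S.descent w u
    have h3 : S.Lf / 2 * ‖u - w‖ ^ 2 ≤ (1 / (2 * S.γ)) * ‖u - w‖ ^ 2 := by
      have hg1 : S.γ * S.Lf < 1 := S.gammaLf
      have hγ0 := S.hγ0
      have hsq : (0:ℝ) ≤ ‖u - w‖ ^ 2 := sq_nonneg _
      have : S.Lf / 2 ≤ 1 / (2 * S.γ) := by
        rw [div_le_div_iff₀ (by norm_num) (by positivity)]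
        nlinarith
      nlinarith
    have : c₀ ≤ S.lsA w u + b := by
      unfold lsA; nlinarith
    exact_mod_cast this

private lemma fbeE_ge {c₀ : ℝ} (hc₀ : ∀ u, (c₀ : EReal) ≤ (S.f u : EReal) + S.g u)
    (w : Euc n) : (c₀ : EReal) ≤ S.fbeE w := by
  rw [fbeE_def']
  exact le_iInf (S.lsA_lower hc₀ w)

private lemma g_prox_ne_top (y : Euc n) : S.g (S.prox y) ≠ ⊤ := by
  obtain ⟨z₀, hz₀⟩ := S.hg_proper
  intro htop
  have h := S.hprox_min y z₀
  rw [htop] at h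
  have hlt : S.g z₀ + (((1 / (2 * S.γ)) * ‖z₀ - y‖ ^ 2 : ℝ) : EReal) < ⊤ :=
    EReal.add_lt_top hz₀ (EReal.coe_ne_top _)
  rw [EReal.top_add_coe] at h
  exact absurd (top_le_iff.1 h) hlt.ne

private lemma lsA_square (x u : Euc n) :
    S.lsA x u = (S.f x - S.γ / 2 * ‖S.f' x‖ ^ 2)
      + (1 / (2 * S.γ)) * ‖u - (x - S.γ • S.f' x)‖ ^ 2 := by
  have hγ0 := S.hγ0
  have h1 : u - (x - S.γ • S.f' x) = (u - x) + S.γ • S.f' x := by abel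
  rw [h1, norm_add_sq_real]
  rw [real_inner_smul_right, norm_smul, real_inner_comm]
  rw [Real.norm_eq_abs, abs_of_pos hγ0]
  unfold lsA
  field_simp
  ring

private lemma key_min (x u : Euc n) :
    ((S.lsA x (S.T x) : ℝ) : EReal) + S.g (S.T x) ≤ ((S.lsA x u : ℝ) : EReal) + S.g u := by
  set y := x - S.γ • S.f' x with hy
  have h := S.hprox_min y u
  have hT : S.T x = S.prox y := rfl
  rw [S.lsA_square x u, S.lsA_square x (S.T x), hT]
  rw [EReal.coe_add, EReal.coe_add]
  rw [add_assoc, add_assoc]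
  refine add_le_add_right ?_ _
  rw [add_comm (((1 / (2 * S.γ)) * ‖S.prox y - y‖ ^ 2 : ℝ) : EReal) _,
    add_comm (((1 / (2 * S.γ)) * ‖u - y‖ ^ 2 : ℝ) : EReal) _]
  exact h

private lemma fbeE_eq_s10 (x : Euc n) :
    S.fbeE x = ((S.lsA x (S.T x) + (S.g (S.T x)).toReal : ℝ) : EReal) := by
  have hgT : ((S.g (S.T x)).toReal : EReal) = S.g (S.T x) :=
    EReal.coe_toReal (S.g_prox_ne_top _) (S.hg_nebot _)
  have : ((S.lsA x (S.T x) + (S.g (S.T x)).toReal : ℝ) : EReal)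
      = ((S.lsA x (S.T x) : ℝ) : EReal) + S.g (S.T x) := by
    rw [EReal.coe_add, hgT]
  rw [this, fbeE_def']
  refine le_antisymm (iInf_le _ (S.T x)) (le_iInf fun u => S.key_min x u)

private lemma fbe_eq (x : Euc n) :
    S.fbe x = S.lsA x (S.T x) + (S.g (S.T x)).toReal := by
  rw [fbe, S.fbeE_eq_s10 x, EReal.toReal_coe]

private lemma fbe_le (w x : Euc n) :
    S.fbe w ≤ S.lsA w (S.T x) + (S.g (S.T x)).toReal := by
  obtain ⟨c₀, hc₀⟩ := S.hφ_bdd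
  have hgT : ((S.g (S.T x)).toReal : EReal) = S.g (S.T x) :=
    EReal.coe_toReal (S.g_prox_ne_top _) (S.hg_nebot _)
  have h1 : S.fbeE w ≤ ((S.lsA w (S.T x) + (S.g (S.T x)).toReal : ℝ) : EReal) := by
    rw [EReal.coe_add, hgT, fbeE_def']
    exact iInf_le _ (S.T x)
  have hbot : S.fbeE w ≠ ⊥ :=
    ((EReal.bot_lt_coe c₀).trans_le (S.fbeE_ge hc₀ w)).ne'
  have := EReal.toReal_le_toReal h1 hbot (EReal.coe_ne_top _)
  rwa [EReal.toReal_coe] at this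

end FBEData

set_option maxHeartbeats 1000000 in
/-- well-definedness of the curvilinear linesearch.  For `σ ∈ (0, γ(1-γL_f)/2)`,
`μ ∈ (0,1)`, `x` with `r := (x - T_γ(x))/γ ≠ 0`, directions `d, s` and any `c ≤ 0`, there is
`τ̄ > 0` such that `φ_γ(x̄ + τ²d + τs) ≤ φ_γ(x) - σ‖r‖² + (μ/2)τ²c` for all `τ ∈ [0, τ̄]`. -/
theorem stmt10 {n : ℕ} (S : FBEData n)
    (σ μ : ℝ) (hσ : 0 < σ) (hσ' : σ < S.γ * (1 - S.γ * S.Lf) / 2)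
    (hμ : 0 < μ) (hμ1 : μ < 1)
    (x : Euc n) (hr : (1 / S.γ) • (x - S.T x) ≠ 0)
    (d s : Euc n) (c : ℝ) (hc : c ≤ 0) :
    ∃ τb : ℝ, 0 < τb ∧ ∀ τ ∈ Set.Icc (0 : ℝ) τb,
      S.fbe (S.T x + τ ^ 2 • d + τ • s)
        ≤ S.fbe x - σ * ‖(1 / S.γ) • (x - S.T x)‖ ^ 2 + (μ / 2) * τ ^ 2 * c := by
  obtain ⟨c₀, hc₀⟩ := S.hφ_bdd
  set xb := S.T x with hxb
  set bx := (S.g (S.T x)).toReal with hbx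
  set r2 := ‖(1 / S.γ) • (x - S.T x)‖ ^ 2 with hr2
  have hγ0 := S.hγ0
  have hγne : S.γ ≠ 0 := hγ0.ne'
  -- r2 in terms of ‖xb - x‖
  have hr2' : r2 = (1 / S.γ) ^ 2 * ‖xb - x‖ ^ 2 := by
    rw [hr2, norm_smul, Real.norm_eq_abs, abs_of_pos (by positivity : (0:ℝ) < 1 / S.γ),
      norm_sub_rev, mul_pow]
  have hr2pos : 0 < r2 := by
    rw [hr2]
    have : ‖(1 / S.γ) • (x - S.T x)‖ ≠ 0 := norm_ne_zero_iff.2 hr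
    positivity
  -- value of fbe x
  have hfbex : S.fbe x = S.f x + ⟪S.f' x, xb - x⟫ + (1 / (2 * S.γ)) * ‖xb - x‖ ^ 2 + bx :=
    S.fbe_eq x
  -- sufficient decrease
  have hdec : S.f xb + bx ≤ S.fbe x - S.γ * (1 - S.γ * S.Lf) / 2 * r2 := by
    have hd := S.descent x xb
    have hcoef : (1 / (2 * S.γ)) * ‖xb - x‖ ^ 2 - S.Lf / 2 * ‖xb - x‖ ^ 2
        = S.γ * (1 - S.γ * S.Lf) / 2 * r2 := by
      rw [hr2']
      field_simp
    nlinarith [sq_nonneg ‖xb - x‖]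
  -- the continuous majorant
  set Ψ : Euc n → ℝ := fun w => S.f w + ⟪S.f' w, xb - w⟫ + (1 / (2 * S.γ)) * ‖xb - w‖ ^ 2 + bx
    with hΨ
  have hup : ∀ w, S.fbe w ≤ Ψ w := fun w => S.fbe_le w x
  have hΨxb : Ψ xb = S.f xb + bx := by simp [hΨ]
  have hfc : Continuous S.f :=
    continuous_iff_continuousAt.2 fun z => (S.hf z).hasFDerivAt.continuousAt
  have hf'c : Continuous S.f' := S.hf_lip.continuous
  have hΨc : Continuous Ψ := by
    apply Continuous.add
    apply Continuous.add
    apply Continuous.add hfc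
    · exact (hf'c.inner (continuous_const.sub continuous_id))
    · exact continuous_const.mul ((continuous_const.sub continuous_id).norm.pow 2)
    · exact continuous_const
  -- the curve and the error margin
  set ε := (S.γ * (1 - S.γ * S.Lf) / 2 - σ) * r2 with hε
  have hεpos : 0 < ε := mul_pos (by linarith) hr2pos
  set h : ℝ → ℝ := fun τ => Ψ (xb + τ ^ 2 • d + τ • s) - μ / 2 * τ ^ 2 * c with hh
  have hhc : ContinuousAt h 0 := by
    apply ContinuousAt.sub
    · have hcur : Continuous fun τ : ℝ => xb + τ ^ 2 • d + τ • s :=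
        (continuous_const.add ((continuous_pow 2).smul continuous_const)).add
          (continuous_id.smul continuous_const)
      exact (hΨc.comp hcur).continuousAt
    · exact ((continuous_const.mul (continuous_pow 2)).mul continuous_const).continuousAt
  have hh0 : h 0 = Ψ xb := by simp [hh]
  have hev : ∀ᶠ τ in 𝓝 (0:ℝ), h τ < Ψ xb + ε := by
    refine hhc.eventually_lt_const ?_
    rw [hh0]; linarith
  obtain ⟨δ, hδpos, hδ⟩ := Metric.eventually_nhds_iff.1 hev
  refine ⟨δ / 2, by positivity, fun τ hτ => ?_⟩
  have hτδ : dist τ 0 < δ := by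
    rw [Real.dist_eq, sub_zero, abs_of_nonneg hτ.1]
    linarith [hτ.2]
  have hlt := hδ hτδ
  have h1 : S.fbe (S.T x + τ ^ 2 • d + τ • s) ≤ Ψ (xb + τ ^ 2 • d + τ • s) := hup _
  have h2 : Ψ (xb + τ ^ 2 • d + τ • s) = h τ + μ / 2 * τ ^ 2 * c := by rw [hh]; ring
  have h3 : Ψ xb + ε ≤ S.fbe x - σ * r2 := by
    rw [hΨxb, hε]; linarith
  calc S.fbe (S.T x + τ ^ 2 • d + τ • s) ≤ h τ + μ / 2 * τ ^ 2 * c := by rw [← h2]; exact h1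
    _ ≤ (Ψ xb + ε) + μ / 2 * τ ^ 2 * c := add_le_add_left hlt.le _
    _ ≤ S.fbe x - σ * r2 + μ / 2 * τ ^ 2 * c := add_le_add_left h3 _
end
end

section
/- The iterates of the curvilinear linesearch scheme satisfy: (i) Σ_{k=0}^∞ ‖r^k‖² < ∞, and in particular r^k → 0; (ii) the set of limit points of (x^k) equals the set of limit points of (x̄^k), and every such limit point x⋆ satisfies T_γ(x⋆) = x⋆; (iii) the sequence (φ_γ(x^k)) converges to a finite value φ⋆; and (iv) if (x^k) is bounded, then φ(x̄^k) → φ⋆ as well. -/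
noncomputable section

open scoped RealInnerProductSpace
open Filter Topology Bornology

/-- The smallest eigenvalue `λ_min(B) = min_{‖s‖=1} ⟪B s, s⟫` of an operator on `ℝⁿ`. -/
def lamMin {n : ℕ} (B : Euc n →L[ℝ] Euc n) : ℝ :=
  sInf ((fun u => ⟪B u, u⟫) '' {u : Euc n | ‖u‖ = 1})

/-- The curvilinear linesearch scheme (Algorithm 2 of the paper) with its standing
assumptions: `f` is moreover `C²` with locally Lipschitz Hessian `f''` (so `φ_γ` is `C¹` with
gradient `Gr = (I - γ∇²f)R_γ`); parameters `σ ∈ (0, γ(1-γL_f)/2)`, `β, μ ∈ (0,1)`; iterates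
`x k` with `x̄^k = xb k = T_γ(x^k)`, residuals `r k ≠ 0` and `rb k = R_γ(x̄^k)`;
`Q k = I - γ∇²f(x̄^k)`, `P k = Jprox_{γg}(x̄^k - γ∇f(x̄^k))`,
`B k = γ⁻¹ Q_k (I - P_k Q_k)`; descent/negative-curvature directions `d k, s k`; and the
backtracking stepsize `τ k = β^(mτ k)` chosen largest in `{β^m}` passing the linesearch test. -/
structure CLScheme (n : ℕ) where
  S : FBEData n
  f'' : Euc n → (Euc n →L[ℝ] Euc n)
  hf'' : ∀ x, HasFDerivAt S.f' (f'' x) x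
  hf''cont : Continuous f''
  hf''lip : LocallyLipschitz f''
  Gr : Euc n → Euc n
  hGr : ∀ y, HasGradientAt S.fbe (Gr y) y
  hGr_eq : ∀ y, Gr y = S.R y - S.γ • f'' y (S.R y)
  σ : ℝ
  β : ℝ
  μ : ℝ
  hσ : 0 < σ
  hσ' : σ < S.γ * (1 - S.γ * S.Lf) / 2
  hβ : 0 < β
  hβ1 : β < 1
  hμ : 0 < μ
  hμ1 : μ < 1
  x : ℕ → Euc n
  d : ℕ → Euc n
  s : ℕ → Euc n
  /-- `x̄^k := T_γ(x^k)` -/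
  xb : ℕ → Euc n
  hxb : ∀ k, xb k = S.T (x k)
  /-- `r^k := (x^k - x̄^k)/γ` -/
  r : ℕ → Euc n
  hr : ∀ k, r k = (1 / S.γ) • (x k - xb k)
  hrne : ∀ k, r k ≠ 0
  /-- `r̄^k := R_γ(x̄^k)` -/
  rb : ℕ → Euc n
  hrb : ∀ k, rb k = S.R (xb k)
  /-- `Q_k := I - γ∇²f(x̄^k)` -/
  Q : ℕ → Euc n →L[ℝ] Euc n
  hQ : ∀ k, Q k = ContinuousLinearMap.id ℝ (Euc n) - S.γ • f'' (xb k)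
  /-- `P_k` is the Jacobian of `prox_{γg}` at `x̄^k - γ∇f(x̄^k)` -/
  P : ℕ → Euc n →L[ℝ] Euc n
  hP : ∀ k, HasFDerivAt S.prox (P k) (xb k - S.γ • S.f' (xb k))
  /-- `B_k := γ⁻¹ Q_k (I - P_k Q_k)` -/
  B : ℕ → Euc n →L[ℝ] Euc n
  hB : ∀ k, B k = S.γ⁻¹ •
    ((Q k).comp (ContinuousLinearMap.id ℝ (Euc n) - (P k).comp (Q k)))
  hd : ∀ k, ⟪(Q k) (rb k), d k⟫ ≤ 0
  hs : ∀ k, ⟪(Q k) (rb k), s k⟫ ≤ 0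
  hs_neg : ∀ k, lamMin (B k) < 0 → ⟪B k (s k), s k⟫ < 0
  hs_zero : ∀ k, 0 ≤ lamMin (B k) → ⟪B k (s k), s k⟫ = 0
  /-- the stepsize `τ_k = β^(mτ_k) ∈ {β^m : m ∈ ℕ}` -/
  τ : ℕ → ℝ
  mτ : ℕ → ℕ
  hτ : ∀ k, τ k = β ^ mτ k
  hupd : ∀ k, x (k + 1) = xb k + (τ k) ^ 2 • d k + (τ k) • s k
  /-- the linesearch condition holds at `τ_k` -/
  hls : ∀ k, S.fbe (x (k + 1))
    ≤ S.fbe (x k) - σ * ‖r k‖ ^ 2 + (μ / 2) * (τ k) ^ 2 * ⟪B k (s k), s k⟫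
  /-- `τ_k` is the largest element of `{β^m}` passing the linesearch condition -/
  hτ_max : ∀ k, ∀ j : ℕ, j < mτ k →
    ¬ (S.fbe (xb k + ((β ^ j : ℝ)) ^ 2 • d k + (β ^ j : ℝ) • s k)
        ≤ S.fbe (x k) - σ * ‖r k‖ ^ 2 + (μ / 2) * ((β ^ j : ℝ)) ^ 2 * ⟪B k (s k), s k⟫)

section AuxLemmas

variable {n : ℕ}

theorem aux_descent (S : FBEData n) (x y : Euc n) :
    S.f y ≤ S.f x + ⟪S.f' x, y - x⟫ + S.Lf / 2 * ‖y - x‖ ^ 2 := by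
  set v := y - x with hv
  have hlip' : ∀ a b : Euc n, ‖S.f' a - S.f' b‖ ≤ S.Lf * ‖a - b‖ := by
    intro a b
    have := S.hf_lip.dist_le_mul a b
    rwa [dist_eq_norm, dist_eq_norm, Real.coe_toNNReal _ S.hLf.le] at this
  have hline : ∀ t : ℝ, HasDerivAt (fun t : ℝ => S.f (x + t • v)) ⟪S.f' (x + t • v), v⟫ t := by
    intro t
    have h1 : HasFDerivAt S.f (InnerProductSpace.toDual ℝ _ (S.f' (x + t • v))) (x + t • v) :=
      (hasGradientAt_iff_hasFDerivAt).1 (S.hf _)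
    have h2 : HasDerivAt (fun t : ℝ => x + t • v) v t := by
      simpa using ((hasDerivAt_id t).smul_const v).const_add x
    exact (h1.comp_hasDerivAt t h2).congr_deriv (by simp)
  set ψ : ℝ → ℝ := fun t => S.f (x + t • v) - t * ⟪S.f' x, v⟫ - S.Lf / 2 * t ^ 2 * ‖v‖ ^ 2 with hψ
  have hψd : ∀ t : ℝ, HasDerivAt ψ (⟪S.f' (x + t • v), v⟫ - ⟪S.f' x, v⟫ - S.Lf * t * ‖v‖ ^ 2) t := by
    intro t
    have := ((hline t).sub ((hasDerivAt_id t).mul_const ⟪S.f' x, v⟫)).sub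
      (((hasDerivAt_pow 2 t).const_mul (S.Lf / 2)).mul_const (‖v‖ ^ 2))
    exact this.congr_deriv (by ring)
  have hcont : Continuous ψ := continuous_iff_continuousAt.2 fun t => (hψd t).continuousAt
  have hmono : AntitoneOn ψ (Set.Icc 0 1) := by
    apply antitoneOn_of_deriv_nonpos (convex_Icc 0 1) hcont.continuousOn
      (fun t _ => (hψd t).differentiableAt.differentiableWithinAt)
    intro t ht
    rw [interior_Icc] at ht
    rw [(hψd t).deriv]
    have h1 : ⟪S.f' (x + t • v) - S.f' x, v⟫ ≤ S.Lf * t * ‖v‖ ^ 2 := by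
      calc ⟪S.f' (x + t • v) - S.f' x, v⟫ ≤ ‖S.f' (x + t • v) - S.f' x‖ * ‖v‖ :=
            real_inner_le_norm _ _
        _ ≤ (S.Lf * ‖(x + t • v) - x‖) * ‖v‖ :=
            mul_le_mul_of_nonneg_right (hlip' _ _) (norm_nonneg _)
        _ = S.Lf * t * ‖v‖ ^ 2 := by
            rw [add_sub_cancel_left, norm_smul, Real.norm_eq_abs, abs_of_pos ht.1]
            ring
    rw [inner_sub_left] at h1
    linarith
  have := hmono (Set.left_mem_Icc.2 zero_le_one) (Set.right_mem_Icc.2 zero_le_one) zero_le_one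
  simp only [hψ, zero_smul, add_zero, one_smul, zero_pow, one_pow] at this
  have hxy : x + v = y := by rw [hv]; abel
  rw [hxy] at this
  linarith

theorem aux_gammaLf (S : FBEData n) : S.γ * S.Lf < 1 := by
  have h1 : S.γ < 1 / S.Lf := S.hγ.trans_le (min_le_left _ _)
  have := mul_lt_mul_of_pos_right h1 S.hLf
  rwa [one_div, inv_mul_cancel₀ S.hLf.ne'] at this

theorem aux_add_real_le {X : EReal} {a b : ℝ} (h : X + (a : EReal) ≤ (b : EReal)) :
    X ≤ ((b - a : ℝ) : EReal) := by
  have h2 := add_le_add_left h (((-a : ℝ) : EReal))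
  rw [add_assoc, ← EReal.coe_add, add_neg_cancel, EReal.coe_zero, add_zero, ← EReal.coe_add] at h2
  convert h2 using 2
  exact sub_eq_add_neg b a

theorem aux_le_add_real {X : EReal} {a b : ℝ} (h : X ≤ ((b - a : ℝ) : EReal)) :
    X + (a : EReal) ≤ (b : EReal) := by
  have h2 := add_le_add_left h ((a : ℝ) : EReal)
  rwa [← EReal.coe_add, sub_add_cancel] at h2

theorem aux_gprox_ne_top (S : FBEData n) (w : Euc n) : S.g (S.prox w) ≠ ⊤ := by
  obtain ⟨z₀, hz₀⟩ := S.hg_proper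
  have h := S.hprox_min w z₀
  intro htop
  rw [htop, EReal.top_add_coe] at h
  exact ((EReal.add_lt_top hz₀ (EReal.coe_ne_top _)).trans_le h).ne rfl

/-- The (finite, real) value of `g` at `T x`. -/
def FBEData.gT (S : FBEData n) (x : Euc n) : ℝ := (S.g (S.T x)).toReal

theorem aux_gT_eq (S : FBEData n) (x : Euc n) : S.g (S.T x) = ((S.gT x : ℝ) : EReal) :=
  (EReal.coe_toReal (aux_gprox_ne_top S _) (S.hg_nebot _)).symm

theorem aux_T_def (S : FBEData n) (x : Euc n) : S.T x = S.prox (x - S.γ • S.f' x) := rfl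

theorem aux_sq (S : FBEData n) (x u : Euc n) :
    S.f x + ⟪S.f' x, u - x⟫ + (1 / (2 * S.γ)) * ‖u - x‖ ^ 2
      = (S.f x - S.γ / 2 * ‖S.f' x‖ ^ 2)
        + (1 / (2 * S.γ)) * ‖u - (x - S.γ • S.f' x)‖ ^ 2 := by
  have hγ := S.hγ0
  have h1 : u - (x - S.γ • S.f' x) = (u - x) + S.γ • S.f' x := by abel
  rw [h1, norm_add_sq_real, real_inner_smul_right, norm_smul, Real.norm_eq_abs,
    abs_of_pos hγ, mul_pow, real_inner_comm (u - x) (S.f' x)]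
  set I := ⟪S.f' x, u - x⟫
  field_simp
  ring

end AuxLemmas

section AuxLemmas2

variable {n : ℕ}

theorem aux_fbeE_eq (S : FBEData n) (x : Euc n) :
    S.fbeE x = ((S.f x + ⟪S.f' x, S.T x - x⟫ + (1 / (2 * S.γ)) * ‖S.T x - x‖ ^ 2
      + S.gT x : ℝ) : EReal) := by
  set w := x - S.γ • S.f' x with hw
  have hTw : S.T x = S.prox w := rfl
  apply le_antisymm
  · refine le_trans (iInf_le _ (S.T x)) ?_
    rw [aux_gT_eq S x, ← EReal.coe_add]
  · apply le_iInf
    intro u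
    have hvalT : S.f x + ⟪S.f' x, S.T x - x⟫ + (1 / (2 * S.γ)) * ‖S.T x - x‖ ^ 2 + S.gT x
        = (S.f x - S.γ / 2 * ‖S.f' x‖ ^ 2)
          + ((1 / (2 * S.γ)) * ‖S.T x - w‖ ^ 2 + S.gT x) := by
      have := aux_sq S x (S.T x)
      rw [← hw] at this
      linarith
    have hvalu : S.f x + ⟪S.f' x, u - x⟫ + (1 / (2 * S.γ)) * ‖u - x‖ ^ 2
        = (S.f x - S.γ / 2 * ‖S.f' x‖ ^ 2) + (1 / (2 * S.γ)) * ‖u - w‖ ^ 2 := by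
      have := aux_sq S x u
      rw [← hw] at this
      linarith
    rw [hvalT, hvalu]
    have hpm := S.hprox_min w u
    rw [← hTw, aux_gT_eq S x] at hpm
    set K := S.f x - S.γ / 2 * ‖S.f' x‖ ^ 2 with hK
    set b1 := (1 / (2 * S.γ)) * ‖S.T x - w‖ ^ 2 with hb1
    set b2 := (1 / (2 * S.γ)) * ‖u - w‖ ^ 2 with hb2
    have e1 : ((K + (b1 + S.gT x) : ℝ) : EReal) = (K : EReal) + (((S.gT x : ℝ) : EReal) + ((b1 : ℝ) : EReal)) := by
      norm_cast
      ring
    have e2 : ((K + b2 : ℝ) : EReal) + S.g u = (K : EReal) + (S.g u + ((b2 : ℝ) : EReal)) := by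
      rw [EReal.coe_add, add_assoc, add_comm ((b2 : ℝ) : EReal) (S.g u)]
    rw [e1, e2]
    exact add_le_add_right hpm _

theorem aux_fbe_eq (S : FBEData n) (x : Euc n) :
    S.fbe x = S.f x + ⟪S.f' x, S.T x - x⟫ + (1 / (2 * S.γ)) * ‖S.T x - x‖ ^ 2 + S.gT x := by
  rw [FBEData.fbe, aux_fbeE_eq, EReal.toReal_coe]

theorem aux_fbeE_coe (S : FBEData n) (x : Euc n) : S.fbeE x = ((S.fbe x : ℝ) : EReal) := by
  rw [aux_fbeE_eq, aux_fbe_eq]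

theorem aux_fbe_lower (S : FBEData n) (c₀ : ℝ)
    (hc : ∀ y, (c₀ : EReal) ≤ (S.f y : EReal) + S.g y) (x : Euc n) : c₀ ≤ S.fbe x := by
  have h1 := hc (S.T x)
  rw [aux_gT_eq S x, ← EReal.coe_add, EReal.coe_le_coe_iff] at h1
  have h2 := aux_descent S x (S.T x)
  have h3 := aux_fbe_eq S x
  have h4 : S.Lf / 2 * ‖S.T x - x‖ ^ 2 ≤ (1 / (2 * S.γ)) * ‖S.T x - x‖ ^ 2 := by
    have hgl := aux_gammaLf S
    have hγ := S.hγ0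
    have hq : (0:ℝ) ≤ ‖S.T x - x‖ ^ 2 := sq_nonneg _
    have : S.Lf / 2 ≤ 1 / (2 * S.γ) := by
      rw [div_le_div_iff₀ (by norm_num) (by positivity)]
      nlinarith
    exact mul_le_mul_of_nonneg_right this hq
  linarith

theorem aux_phiT_le (S : FBEData n) (x : Euc n) :
    S.f (S.T x) + S.gT x ≤ S.fbe x - (1 - S.γ * S.Lf) / (2 * S.γ) * ‖S.T x - x‖ ^ 2 := by
  have h2 := aux_descent S x (S.T x)
  have h3 := aux_fbe_eq S x
  have h4 : (1 - S.γ * S.Lf) / (2 * S.γ) * ‖S.T x - x‖ ^ 2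
      = (1 / (2 * S.γ)) * ‖S.T x - x‖ ^ 2 - S.Lf / 2 * ‖S.T x - x‖ ^ 2 := by
    have hγ : S.γ ≠ 0 := S.hγ0.ne'
    field_simp
  linarith

theorem aux_fbe_le_phiT (S : FBEData n) (x : Euc n) :
    S.fbe (S.T x) ≤ S.f (S.T x) + S.gT x := by
  have h1 : S.fbeE (S.T x) ≤ ((S.f (S.T x) + S.gT x : ℝ) : EReal) := by
    refine le_trans (iInf_le _ (S.T x)) ?_
    rw [aux_gT_eq S x, ← EReal.coe_add]
    apply le_of_eq
    congr 1
    rw [sub_self, inner_zero_right, norm_zero]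
    ring
  rw [aux_fbeE_coe, EReal.coe_le_coe_iff] at h1
  exact h1
end AuxLemmas2

section AuxLemmas3

variable {n : ℕ}

theorem aux_cluster_transfer {u v : ℕ → Euc n}
    (h : Filter.Tendsto (fun k => dist (u k) (v k)) Filter.atTop (𝓝 0)) (p : Euc n)
    (hp : MapClusterPt p Filter.atTop u) : MapClusterPt p Filter.atTop v := by
  rw [mapClusterPt_iff_frequently] at hp ⊢
  intro s hs
  obtain ⟨ε, hε, hball⟩ := Metric.mem_nhds_iff.1 hs
  have h1 : ∀ᶠ k in Filter.atTop, dist (u k) (v k) < ε / 2 :=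
    h.eventually (eventually_lt_nhds (by positivity) |>.mono fun a ha => ha)
  have h2 : ∃ᶠ k in Filter.atTop, u k ∈ Metric.ball p (ε / 2) :=
    hp _ (Metric.ball_mem_nhds p (by positivity))
  refine (h2.and_eventually h1).mono ?_
  rintro k ⟨hk1, hk2⟩
  apply hball
  rw [Metric.mem_ball] at hk1 ⊢
  calc dist (v k) p ≤ dist (v k) (u k) + dist (u k) p := dist_triangle _ _ _
    _ < ε := by rw [dist_comm] at hk2; linarith

theorem aux_fixed (S : FBEData n) (x : ℕ → Euc n)
    (hr0 : Filter.Tendsto (fun k => x k - S.T (x k)) Filter.atTop (𝓝 0))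
    (p : Euc n) (hp : MapClusterPt p Filter.atTop x) : S.T p = p := by
  set w := p - S.γ • S.f' p with hw
  obtain ⟨G, hG⟩ : ∃ G : ℝ, S.g (S.prox w) = (G : EReal) :=
    ⟨(S.g (S.prox w)).toReal, (EReal.coe_toReal (aux_gprox_ne_top S w) (S.hg_nebot _)).symm⟩
  have hf'c : Continuous S.f' := S.hf_lip.continuous
  have key : S.g p ≤ ((G + (1 / (2 * S.γ)) * ‖S.prox w - w‖ ^ 2
      - (1 / (2 * S.γ)) * ‖p - w‖ ^ 2 : ℝ) : EReal) := by
    by_contra hcon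
    push_neg at hcon
    obtain ⟨y, hy1, hy2⟩ := EReal.exists_between_coe_real hcon
    -- lower semicontinuity at p
    have hlsc := S.hg_lsc p ((y : ℝ) : EReal) hy2
    rw [Metric.eventually_nhds_iff] at hlsc
    obtain ⟨ε₂, hε₂, hlsc⟩ := hlsc
    -- continuity of the comparison function
    set h : Euc n × Euc n → ℝ := fun qq =>
      G + (1 / (2 * S.γ)) * ‖S.prox w - (qq.1 - S.γ • S.f' qq.1)‖ ^ 2
        - (1 / (2 * S.γ)) * ‖qq.2 - (qq.1 - S.γ • S.f' qq.1)‖ ^ 2 with hh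
    have hhc : Continuous h := by
      apply Continuous.sub
      · apply Continuous.add continuous_const
        apply Continuous.mul continuous_const
        apply Continuous.pow
        apply Continuous.norm
        exact Continuous.sub continuous_const
          ((continuous_fst).sub ((hf'c.comp continuous_fst).const_smul S.γ))
      · apply Continuous.mul continuous_const
        apply Continuous.pow
        apply Continuous.norm
        exact (continuous_snd).sub ((continuous_fst).sub ((hf'c.comp continuous_fst).const_smul S.γ))
    have hpp : h (p, p) < y := by
      simp only [hh, ← hw]
      linarith [EReal.coe_lt_coe_iff.1 hy1]
    have hev : ∀ᶠ qq in 𝓝 (p, p), h qq < y :=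
      (hhc.continuousAt (x := (p, p))).eventually_lt continuousAt_const hpp
    rw [Metric.eventually_nhds_iff] at hev
    obtain ⟨ε₁, hε₁, hev⟩ := hev
    set δ : ℝ := min ε₁ ε₂ with hδ
    have hδpos : 0 < δ := lt_min hε₁ hε₂
    have hev2 : ∀ᶠ k in Filter.atTop, ‖x k - S.T (x k)‖ < δ / 2 := by
      have := hr0.eventually (Metric.eventually_nhds_iff.2
        ⟨δ / 2, by positivity, fun {z} hz => hz⟩)
      simpa [dist_eq_norm] using this
    have hfreq : ∃ᶠ k in Filter.atTop, dist (x k) p < δ / 2 :=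
      (mapClusterPt_iff_frequently.1 hp) _ (Metric.ball_mem_nhds p (by positivity))
    obtain ⟨k, hk1, hk2⟩ := (hfreq.and_eventually hev2).exists
    -- the two points
    set q := x k with hq
    set q' := S.T (x k) with hq'
    have hd1 : dist q p < δ := hk1.trans_le (by linarith)
    have hd2 : dist q' p < δ := by
      calc dist q' p ≤ dist q' q + dist q p := dist_triangle _ _ _
        _ < δ / 2 + δ / 2 := by
            rw [dist_eq_norm]
            have : ‖q' - q‖ = ‖q - q'‖ := norm_sub_rev _ _
            rw [this]
            exact add_lt_add hk2 hk1
        _ = δ := by ring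
    -- lsc bound
    have hy3 : ((y : ℝ) : EReal) < S.g q' := hlsc (hd2.trans_le (min_le_right _ _))
    -- prox bound
    have hpm := S.hprox_min (q - S.γ • S.f' q) (S.prox w)
    rw [hG] at hpm
    have hq'w : S.prox (q - S.γ • S.f' q) = q' := rfl
    rw [hq'w, ← EReal.coe_add] at hpm
    have hgq' : S.g q' ≤ ((h (q, q') : ℝ) : EReal) := by
      have := aux_add_real_le hpm
      convert this using 2
    have hhy : h (q, q') < y := hev (by
      rw [Prod.dist_eq]
      exact max_lt (hd1.trans_le (min_le_left _ _)) (hd2.trans_le (min_le_left _ _)))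
    have : ((y : ℝ) : EReal) < ((y : ℝ) : EReal) :=
      hy3.trans_le (hgq'.trans (by exact_mod_cast hhy.le))
    exact this.false
  -- conclude via uniqueness
  have hkey2 : S.g p + (((1 / (2 * S.γ)) * ‖p - w‖ ^ 2 : ℝ) : EReal)
      ≤ S.g (S.prox w) + (((1 / (2 * S.γ)) * ‖S.prox w - w‖ ^ 2 : ℝ) : EReal) := by
    rw [hG, ← EReal.coe_add]
    exact aux_le_add_real (by convert key using 2)
  have := S.hprox_unique w p hkey2
  rw [aux_T_def, ← hw]
  exact this.symm

end AuxLemmas3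


/-- criticality of limit points of the curvilinear linesearch scheme:
(i) `Σ ‖r^k‖² < ∞`, hence `r^k → 0`; (ii) the cluster points of `(x^k)` and `(x̄^k)` coincide
and are fixed points of `T_γ`; (iii) `φ_γ(x^k)` converges to a finite value `φ⋆`; (iv) if
`(x^k)` is bounded then `φ(x̄^k) → φ⋆` as well. -/
theorem stmt11 {n : ℕ} (A : CLScheme n) :
    Summable (fun k => ‖A.r k‖ ^ 2) ∧
    Filter.Tendsto A.r Filter.atTop (𝓝 0) ∧
    {p : Euc n | MapClusterPt p Filter.atTop A.x}
      = {p : Euc n | MapClusterPt p Filter.atTop A.xb} ∧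
    (∀ p : Euc n, MapClusterPt p Filter.atTop A.x → A.S.T p = p) ∧
    ∃ φs : ℝ, Filter.Tendsto (fun k => A.S.fbe (A.x k)) Filter.atTop (𝓝 φs) ∧
      (Bornology.IsBounded (Set.range A.x) →
        Filter.Tendsto (fun k => A.S.phi (A.xb k)) Filter.atTop (𝓝 (φs : EReal))) := by
  obtain ⟨c₀, hc₀⟩ := A.S.hφ_bdd
  have hγ0 := A.S.hγ0
  have hlow : ∀ y, c₀ ≤ A.S.fbe y := aux_fbe_lower A.S c₀ hc₀
  have hBss : ∀ k, ⟪A.B k (A.s k), A.s k⟫ ≤ 0 := by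
    intro k
    rcases le_or_gt 0 (lamMin (A.B k)) with h | h
    · exact le_of_eq (A.hs_zero k h)
    · exact (A.hs_neg k h).le
  have hdec : ∀ k, A.S.fbe (A.x (k + 1)) ≤ A.S.fbe (A.x k) - A.σ * ‖A.r k‖ ^ 2 := by
    intro k
    have h1 := A.hls k
    have h2 : A.μ / 2 * A.τ k ^ 2 * ⟪A.B k (A.s k), A.s k⟫ ≤ 0 :=
      mul_nonpos_of_nonneg_of_nonpos (mul_nonneg (by linarith [A.hμ]) (sq_nonneg _)) (hBss k)
    linarith
  set a : ℕ → ℝ := fun k => A.S.fbe (A.x k) with ha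
  have hanti : Antitone a := antitone_nat_of_succ_le (fun k => by
    have h1 := hdec k
    have h2 : 0 ≤ A.σ * ‖A.r k‖ ^ 2 := mul_nonneg A.hσ.le (sq_nonneg _)
    simp only [ha]
    linarith)
  have hbdd : BddBelow (Set.range a) := ⟨c₀, by rintro y ⟨k, rfl⟩; exact hlow _⟩
  set φs := ⨅ k, a k with hφs
  have htend : Filter.Tendsto a Filter.atTop (𝓝 φs) := tendsto_atTop_ciInf hanti hbdd
  have hpartial : ∀ N, A.σ * ∑ i ∈ Finset.range N, ‖A.r i‖ ^ 2 ≤ a 0 - a N := by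
    intro N
    induction N with
    | zero => simp
    | succ N ih =>
        rw [Finset.sum_range_succ, mul_add]
        have := hdec N
        simp only [ha] at ih ⊢
        linarith
  have hsumle : ∀ N, ∑ i ∈ Finset.range N, ‖A.r i‖ ^ 2 ≤ (a 0 - c₀) / A.σ := by
    intro N
    rw [le_div_iff₀ A.hσ]
    have h1 := hpartial N
    have h2 := hlow (A.x N)
    simp only [ha] at h1 h2 ⊢
    nlinarith
  have hsummable : Summable (fun k => ‖A.r k‖ ^ 2) :=
    summable_of_sum_range_le (fun k => sq_nonneg _) hsumle
  have hrnorm : Filter.Tendsto (fun k => ‖A.r k‖) Filter.atTop (𝓝 0) := by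
    have h1 : Filter.Tendsto (fun k => ‖A.r k‖ ^ 2) Filter.atTop (𝓝 0) :=
      hsummable.tendsto_atTop_zero
    have h2 := (Real.continuous_sqrt.tendsto 0).comp h1
    simp only [Function.comp_def, Real.sqrt_zero] at h2
    convert h2 using 2 with k
    rw [Real.sqrt_sq (norm_nonneg _)]
  have hr0 : Filter.Tendsto A.r Filter.atTop (𝓝 0) :=
    tendsto_zero_iff_norm_tendsto_zero.2 hrnorm
  have hxxb : ∀ k, A.x k - A.xb k = A.S.γ • A.r k := by
    intro k
    rw [A.hr k, smul_smul, mul_one_div, div_self hγ0.ne', one_smul]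
  have hdiff : Filter.Tendsto (fun k => A.x k - A.xb k) Filter.atTop (𝓝 0) := by
    rw [funext hxxb]
    simpa using hr0.const_smul A.S.γ
  have hdist : Filter.Tendsto (fun k => dist (A.x k) (A.xb k)) Filter.atTop (𝓝 0) := by
    simp only [dist_eq_norm]
    simpa using hdiff.norm
  have hdist' : Filter.Tendsto (fun k => dist (A.xb k) (A.x k)) Filter.atTop (𝓝 0) := by
    simpa [dist_comm] using hdist
  have hseteq : {p : Euc n | MapClusterPt p Filter.atTop A.x}
      = {p : Euc n | MapClusterPt p Filter.atTop A.xb} := by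
    ext p
    exact ⟨aux_cluster_transfer hdist p, aux_cluster_transfer hdist' p⟩
  have hfix : ∀ p : Euc n, MapClusterPt p Filter.atTop A.x → A.S.T p = p := by
    intro p hp
    refine aux_fixed A.S A.x ?_ p hp
    have he : (fun k => A.x k - A.S.T (A.x k)) = fun k => A.x k - A.xb k := by
      funext k
      rw [A.hxb k]
    rw [he]
    exact hdiff
  refine ⟨hsummable, hr0, hseteq, hfix, φs, htend, ?_⟩
  intro hbound
  -- part (iv)
  have hfbec : Continuous A.S.fbe :=
    continuous_iff_continuousAt.2 fun y => ((A.hGr y).differentiableAt).continuousAt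
  obtain ⟨M₁, hM₁⟩ := isBounded_iff_forall_norm_le.1 hbound
  have hM₁' : ∀ k, ‖A.x k‖ ≤ M₁ := fun k => hM₁ _ (Set.mem_range_self k)
  obtain ⟨M₂, hM₂⟩ := isBounded_iff_forall_norm_le.1
    (Metric.isBounded_range_of_tendsto A.r hr0)
  have hM₂' : ∀ k, ‖A.r k‖ ≤ M₂ := fun k => hM₂ _ (Set.mem_range_self k)
  set M : ℝ := M₁ + A.S.γ * M₂ with hMdef
  have hγM₂ : 0 ≤ A.S.γ * M₂ := mul_nonneg hγ0.le ((norm_nonneg (A.r 0)).trans (hM₂' 0))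
  have hMx : ∀ k, A.x k ∈ Metric.closedBall (0 : Euc n) M := by
    intro k
    rw [Metric.mem_closedBall, dist_zero_right]
    linarith [hM₁' k]
  have hMxb : ∀ k, A.xb k ∈ Metric.closedBall (0 : Euc n) M := by
    intro k
    rw [Metric.mem_closedBall, dist_zero_right]
    have h1 : A.xb k = A.x k - A.S.γ • A.r k := by rw [← hxxb k]; abel
    rw [h1]
    calc ‖A.x k - A.S.γ • A.r k‖ ≤ ‖A.x k‖ + ‖A.S.γ • A.r k‖ := norm_sub_le _ _
      _ ≤ M₁ + A.S.γ * M₂ := by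
          rw [norm_smul, Real.norm_eq_abs, abs_of_pos hγ0]
          exact add_le_add (hM₁' k) (mul_le_mul_of_nonneg_left (hM₂' k) hγ0.le)
  have hUC := (isCompact_closedBall (0 : Euc n) M).uniformContinuousOn_of_continuous
    hfbec.continuousOn
  rw [Metric.uniformContinuousOn_iff] at hUC
  have hgap : Filter.Tendsto (fun k => A.S.fbe (A.xb k) - A.S.fbe (A.x k))
      Filter.atTop (𝓝 0) := by
    rw [Metric.tendsto_atTop]
    intro ε hε
    obtain ⟨δ, hδ, hUC'⟩ := hUC ε hε
    have hev : ∀ᶠ k in Filter.atTop, dist (A.x k) (A.xb k) < δ :=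
      hdist.eventually (eventually_lt_nhds hδ |>.mono fun a ha => ha)
    rw [Filter.eventually_atTop] at hev
    obtain ⟨N, hN⟩ := hev
    refine ⟨N, fun k hk => ?_⟩
    have := hUC' (A.xb k) (hMxb k) (A.x k) (hMx k) (by rw [dist_comm]; exact hN k hk)
    simpa [Real.dist_eq] using this
  have htendxb : Filter.Tendsto (fun k => A.S.fbe (A.xb k)) Filter.atTop (𝓝 φs) := by
    have := hgap.add htend
    simpa [ha] using this
  set δ0 : ℝ := (1 - A.S.γ * A.S.Lf) / (2 * A.S.γ) with hδ0
  set pT : ℕ → ℝ := fun k => A.S.f (A.xb k) + A.S.gT (A.x k) with hpT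
  have hlo : ∀ k, A.S.fbe (A.xb k) ≤ pT k := by
    intro k
    have := aux_fbe_le_phiT A.S (A.x k)
    rw [← A.hxb k] at this
    exact this
  have hhi : ∀ k, pT k ≤ A.S.fbe (A.x k) - δ0 * ‖A.xb k - A.x k‖ ^ 2 := by
    intro k
    have := aux_phiT_le A.S (A.x k)
    rw [← A.hxb k] at this
    exact this
  have hnormsq : Filter.Tendsto (fun k => ‖A.xb k - A.x k‖ ^ 2) Filter.atTop (𝓝 0) := by
    have h1 : Filter.Tendsto (fun k => ‖A.xb k - A.x k‖) Filter.atTop (𝓝 0) := by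
      have : (fun k => ‖A.xb k - A.x k‖) = fun k => ‖A.x k - A.xb k‖ := by
        funext k
        exact norm_sub_rev _ _
      rw [this]
      simpa using hdiff.norm
    have := h1.pow 2
    simpa using this
  have hu : Filter.Tendsto (fun k => A.S.fbe (A.x k) - δ0 * ‖A.xb k - A.x k‖ ^ 2)
      Filter.atTop (𝓝 φs) := by
    have := htend.sub (hnormsq.const_mul δ0)
    simpa using this
  have hsq : Filter.Tendsto pT Filter.atTop (𝓝 φs) :=
    tendsto_of_tendsto_of_tendsto_of_le_of_le htendxb hu hlo hhi
  have hphi : (fun k => A.S.phi (A.xb k)) = fun k => ((pT k : ℝ) : EReal) := by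
    funext k
    have hgg := aux_gT_eq A.S (A.x k)
    rw [← A.hxb k] at hgg
    rw [FBEData.phi, hgg, ← EReal.coe_add]
  rw [hphi]
  exact EReal.tendsto_coe.2 hsq
end
end
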